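/- arXiv:2204.01557 — 5 statements merged into one kernel-verified Lean document; each statement's English description precedes it below -/
import Mathlib

section
/- Every proper non-pathological ideal is contained in some proper density ideal: if φ is self a non-pathological lower semicontinuous submeasure on ω with ω ∉ Exh(φ), then there exists a density submeasure ψ on ω with ω ∉ Exh(ψ) such that Exh(φ) ⊆ Exh(ψ). -/
open Filter Topology

noncomputable section

/-- The topology of the space `N_F = ω ∪ {p_F}` on `Option α`, where `none` plays the
role of the point `p_F`: every `some a` is isolated, and neighborhoods of `none`
are the sets `A ∪ {p_F}` with `A ∈ F`. -/
def NFtop {α : Type*} (F : Filter α) : TopologicalSpace (Option α) where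
  IsOpen U := none ∈ U → {a : α | some a ∈ U} ∈ F
  isOpen_univ := fun _ => Filter.univ_mem
  isOpen_inter := fun U V hU hV h => F.inter_sets (hU h.1) (hV h.2)
  isOpen_sUnion := fun S hS h => by
    obtain ⟨U, hU, hnU⟩ := h
    exact Filter.mem_of_superset (hS U hU hnU) fun a ha => ⟨U, hU, ha⟩

/-- The norm `‖μ‖ = Σ |α_i|` of a finitely supported signed measure. -/
def mnorm {X : Type*} (μ : X →₀ ℝ) : ℝ := ∑ x ∈ μ.support, |μ x|

/-- The integral `μ(f) = Σ α_i f(x_i)`. -/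
def mIntg {X : Type*} (μ : X →₀ ℝ) (f : X → ℝ) : ℝ := ∑ x ∈ μ.support, μ x * f x

/-- The norm of the restriction `μ ↾ A`. -/
def mnormOn {X : Type*} (μ : X →₀ ℝ) (A : Set X) : ℝ :=
  ∑ x ∈ μ.support, Set.indicator A (fun y => |μ y|) x

/-- The value `μ(A)` of a finitely supported signed measure on a set. -/
def msetOf {X : Type*} (μ : X →₀ ℝ) (A : Set X) : ℝ :=
  ∑ x ∈ μ.support, Set.indicator A (fun y => μ y) x

/-- A JN-sequence on `X` (with topology `t`). -/
def IsJNSeq {X : Type*} (t : TopologicalSpace X) (μ : ℕ → (X →₀ ℝ)) : Prop :=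
  (∀ n, mnorm (μ n) = 1) ∧
  ∀ f : X → ℝ, @Continuous X ℝ t _ f →
    Tendsto (fun n => mIntg (μ n) f) atTop (nhds 0)

/-- A BJN-sequence on `X` (with topology `t`). -/
def IsBJNSeq {X : Type*} (t : TopologicalSpace X) (μ : ℕ → (X →₀ ℝ)) : Prop :=
  (∀ n, mnorm (μ n) = 1) ∧
  ∀ f : X → ℝ, @Continuous X ℝ t _ f → (∃ C : ℝ, ∀ x, |f x| ≤ C) →
    Tendsto (fun n => mIntg (μ n) f) atTop (nhds 0)

/-- The Josefson–Nissenzweig property. -/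
def JNP {X : Type*} (t : TopologicalSpace X) : Prop := ∃ μ, IsJNSeq t μ

/-- The bounded Josefson–Nissenzweig property. -/
def BJNP {X : Type*} (t : TopologicalSpace X) : Prop := ∃ μ, IsBJNSeq t μ

/-- A free filter: a proper filter containing all cofinite sets. -/
def IsFreeFilter {α : Type*} (F : Filter α) : Prop := F.NeBot ∧ F ≤ Filter.cofinite

/-- Katětov preorder: `F ≤_K G`. -/
def KatetovLE (F G : Filter ℕ) : Prop := ∃ f : ℕ → ℕ, ∀ A ∈ F, f ⁻¹' A ∈ G

/-- A submeasure on `ω`: monotone, subadditive, vanishing on `∅`, finite on singletons. -/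
structure Submeasure where
  m : Set ℕ → ENNReal
  empty : m ∅ = 0
  lt_top_singleton : ∀ n : ℕ, m {n} < ⊤
  le_union : ∀ A B : Set ℕ, m A ≤ m (A ∪ B)
  union_le : ∀ A B : Set ℕ, m (A ∪ B) ≤ m A + m B

/-- Lower semicontinuity: `φ(A) = lim_n φ(A ∩ [0,n])`. -/
def Submeasure.LSC (φ : Submeasure) : Prop :=
  ∀ A : Set ℕ, Tendsto (fun n : ℕ => φ.m (A ∩ Set.Iic n)) atTop (nhds (φ.m A))

/-- Membership in the exhaustive ideal `Exh(φ)`: `lim_n φ(A \ [0,n]) = 0`. -/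
def Submeasure.ExhMem (φ : Submeasure) (A : Set ℕ) : Prop :=
  Tendsto (fun n : ℕ => φ.m (A \ Set.Iic n)) atTop (nhds 0)

/-- The value of a finitely supported nonnegative measure on `ω` on a set, in `ℝ≥0∞`. -/
def fmeasE (ν : ℕ →₀ NNReal) (A : Set ℕ) : ENNReal :=
  ∑ x ∈ ν.support, Set.indicator A (fun y => (ν y : ENNReal)) x

/-- A density submeasure: the pointwise supremum of a sequence of finitely supported
nonnegative measures on `ω` with pairwise disjoint supports. -/
def Submeasure.IsDensity (φ : Submeasure) : Prop :=
  ∃ ν : ℕ → (ℕ →₀ NNReal),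
    (∀ i j, i ≠ j → Disjoint (ν i).support (ν j).support) ∧
    ∀ A : Set ℕ, φ.m A = ⨆ n, fmeasE (ν n) A

/-- The (σ-additive, nonnegative) measure on `P(ω)` with point masses `g`. -/
def measOfWeights (g : ℕ → ENNReal) (A : Set ℕ) : ENNReal := ∑' n : ℕ, Set.indicator A g n

/-- Non-pathological submeasure: `φ(A)` is a supremum of values of dominated measures. -/
def Submeasure.NonPathological (φ : Submeasure) : Prop :=
  ∀ A : Set ℕ,
    φ.m A = ⨆ (g : ℕ → ENNReal) (_ : ∀ B : Set ℕ, measOfWeights g B ≤ φ.m B),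
      measOfWeights g A

private lemma submeasure_mono (φ : Submeasure) {A B : Set ℕ} (h : A ⊆ B) :
    φ.m A ≤ φ.m B := by
  have := φ.le_union A B
  rwa [Set.union_eq_self_of_subset_left h] at this

private lemma fmeasE_mono (ν : ℕ →₀ NNReal) {A B : Set ℕ} (h : A ⊆ B) :
    fmeasE ν A ≤ fmeasE ν B := by
  refine Finset.sum_le_sum fun x _ => ?_
  exact Set.indicator_le_indicator_of_subset h (fun _ => zero_le) x

private lemma fmeasE_union_le (ν : ℕ →₀ NNReal) (A B : Set ℕ) :
    fmeasE ν (A ∪ B) ≤ fmeasE ν A + fmeasE ν B := by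
  rw [fmeasE, fmeasE, fmeasE, ← Finset.sum_add_distrib]
  refine Finset.sum_le_sum fun x _ => ?_
  by_cases hA : x ∈ A
  · rw [Set.indicator_of_mem (Set.mem_union_left _ hA), Set.indicator_of_mem hA]
    exact le_self_add
  · by_cases hB : x ∈ B
    · rw [Set.indicator_of_mem (Set.mem_union_right _ hB), Set.indicator_of_mem hB]
      exact le_add_self
    · rw [Set.indicator_of_notMem (fun h => h.elim hA hB),
        Set.indicator_of_notMem hA]
      simp

private lemma fmeasE_eq_total (ν : ℕ →₀ NNReal) {B : Set ℕ}
    (h : ∀ x ∈ ν.support, x ∈ B) :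
    fmeasE ν B = ∑ x ∈ ν.support, (ν x : ENNReal) :=
  Finset.sum_congr rfl fun x hx => Set.indicator_of_mem (h x hx) _

private lemma key_step (φ : Submeasure) (hnp : φ.NonPathological) {c : ENNReal}
    (n : ℕ) (hc : c < φ.m (Set.univ \ Set.Iic n)) :
    ∃ ν : ℕ →₀ NNReal, (∀ B, fmeasE ν B ≤ φ.m B) ∧ (∀ m ∈ ν.support, n < m) ∧
      c < ∑ x ∈ ν.support, (ν x : ENNReal) := by
  classical
  set A : Set ℕ := Set.univ \ Set.Iic n with hAdef
  rw [hnp A, lt_iSup_iff] at hc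
  obtain ⟨g, hc⟩ := hc
  rw [lt_iSup_iff] at hc
  obtain ⟨hgdom, hc⟩ := hc
  have hsingle : ∀ m : ℕ, measOfWeights g {m} = g m := by
    intro m
    rw [measOfWeights, tsum_eq_single m]
    · simp
    · intro b hb
      exact Set.indicator_of_notMem (by simpa using hb) _
  have hgfin : ∀ m, g m < ⊤ := fun m =>
    lt_of_le_of_lt (le_of_le_of_eq (le_of_eq (hsingle m).symm) rfl |>.trans (hgdom {m}))
      (φ.lt_top_singleton m)
  have hfin : ∀ m, Set.indicator A g m ≠ ⊤ := fun m =>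
    (lt_of_le_of_lt (Set.indicator_le_self A g m) (hgfin m)).ne
  rw [measOfWeights, ENNReal.tsum_eq_iSup_sum, lt_iSup_iff] at hc
  obtain ⟨s, hs⟩ := hc
  set f : ℕ → NNReal := fun m =>
    if m ∈ s then (Set.indicator A g m).toNNReal else 0 with hfdef
  have hf0 : ∀ m, f m ≠ 0 → m ∈ s := by
    intro m hm
    by_contra h
    exact hm (by simp [hfdef, h])
  refine ⟨Finsupp.onFinset s f hf0, ?_, ?_, ?_⟩
  · intro B
    refine le_trans ?_ (hgdom B)
    rw [fmeasE, measOfWeights]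
    refine le_trans (Finset.sum_le_sum fun x _ => ?_) (ENNReal.sum_le_tsum _)
    by_cases hxB : x ∈ B
    · rw [Set.indicator_of_mem hxB, Set.indicator_of_mem hxB]
      simp only [Finsupp.onFinset_apply, hfdef]
      split_ifs with h
      · exact le_trans ENNReal.coe_toNNReal_le_self (Set.indicator_le_self A g x)
      · simp
    · rw [Set.indicator_of_notMem hxB, Set.indicator_of_notMem hxB]
  · intro m hm
    rw [Finsupp.mem_support_iff, Finsupp.onFinset_apply] at hm
    have hmA : m ∈ A := by
      by_contra hmA
      exact hm (by simp [hfdef, Set.indicator_of_notMem hmA])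
    simpa [hAdef] using hmA
  · have heq : ∑ x ∈ (Finsupp.onFinset s f hf0).support,
        ((Finsupp.onFinset s f hf0 x : NNReal) : ENNReal)
        = ∑ x ∈ s, Set.indicator A g x := by
      rw [Finset.sum_subset Finsupp.support_onFinset_subset
        (fun x _ hnx => by simp [Finsupp.notMem_support_iff.mp hnx])]
      refine Finset.sum_congr rfl fun x hx => ?_
      simp only [Finsupp.onFinset_apply, hfdef, if_pos hx]
      exact ENNReal.coe_toNNReal (hfin x)
    rw [heq]
    exact hs

/-- Every proper non-pathological ideal is contained in a proper density ideal:
if `φ` is a non-pathological lsc submeasure with `ω ∉ Exh(φ)`, then there is a density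
submeasure `ψ` with `ω ∉ Exh(ψ)` and `Exh(φ) ⊆ Exh(ψ)`. -/
theorem stmt8 (φ : Submeasure) (hlsc : φ.LSC) (hnp : φ.NonPathological)
    (hproper : ¬ φ.ExhMem Set.univ) :
    ∃ ψ : Submeasure, ψ.IsDensity ∧ ¬ ψ.ExhMem Set.univ ∧
      ∀ A : Set ℕ, φ.ExhMem A → ψ.ExhMem A := by
  classical
  -- extract a positive lower bound `c` for the tail values of `φ`
  set a : ℕ → ENNReal := fun n => φ.m (Set.univ \ Set.Iic n) with hadef
  have hanti : Antitone a := fun n m h =>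
    submeasure_mono φ (Set.diff_subset_diff_right (Set.Iic_subset_Iic.mpr h))
  have htend : Tendsto a atTop (nhds (⨅ n, a n)) := tendsto_atTop_iInf hanti
  have hL : (⨅ n, a n) ≠ 0 := by
    intro h
    rw [h] at htend
    exact hproper htend
  set c : ENNReal := min (⨅ n, a n) 1 / 2 with hcdef
  have hmin0 : min (⨅ n, a n) 1 ≠ 0 := by
    simp only [ne_eq, min_eq_iff, not_or]
    constructor
    · intro ⟨h1, _⟩; exact hL h1
    · intro ⟨h1, _⟩; exact one_ne_zero h1
  have hmintop : min (⨅ n, a n) 1 ≠ ⊤ :=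
    ne_top_of_le_ne_top ENNReal.one_ne_top (min_le_right _ _)
  have hc0 : 0 < c := ENNReal.div_pos hmin0 (by norm_num)
  have hc : ∀ n, c < a n := fun n =>
    lt_of_lt_of_le (ENNReal.half_lt_self hmin0 hmintop)
      ((min_le_left _ _).trans (iInf_le a n))
  -- choose finitely supported pieces
  have hkey := fun n => key_step φ hnp n (hc n)
  choose ν hν1 hν2 hν3 using hkey
  set seq : ℕ → (ℕ →₀ NNReal) := fun k =>
    Nat.rec (ν 0) (fun _ p => ν (p.support.sup id)) k with hseqdef
  have seq_succ : ∀ k, seq (k + 1) = ν ((seq k).support.sup id) := fun k => rfl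
  have dom : ∀ k B, fmeasE (seq k) B ≤ φ.m B := by
    intro k B; cases k <;> exact hν1 _ _
  have mass : ∀ k, c < ∑ x ∈ (seq k).support, ((seq k) x : ENNReal) := by
    intro k; cases k <;> exact hν3 _
  have gt_step : ∀ k, ∀ m ∈ (seq (k + 1)).support, (seq k).support.sup id < m := by
    intro k; rw [seq_succ]; exact hν2 _
  have suppne : ∀ k, (seq k).support.Nonempty := by
    intro k
    rw [Finset.nonempty_iff_ne_empty]
    intro h
    have := mass k
    rw [h] at this
    simp at this
  set sfun : ℕ → ℕ := fun k => (seq k).support.sup id with hsdef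
  have hs_strict : StrictMono sfun := by
    refine strictMono_nat_of_lt_succ fun k => ?_
    obtain ⟨e, he⟩ := suppne (k + 1)
    exact lt_of_lt_of_le (gt_step k e he) (Finset.le_sup (f := id) he)
  have hks : ∀ k, k ≤ sfun k := fun k => hs_strict.le_apply
  -- support of `seq (m+1)` lives above `m`
  have hsupp_gt : ∀ m, ∀ x ∈ (seq (m + 1)).support, m < x := fun m x hx =>
    lt_of_le_of_lt (hks m) (gt_step m x hx)
  -- define the density submeasure ψ
  set ψ : Submeasure :=
    { m := fun A => ⨆ k, fmeasE (seq k) A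
      empty := le_zero_iff.mp (iSup_le fun k => φ.empty ▸ dom k ∅)
      lt_top_singleton := fun n =>
        lt_of_le_of_lt (iSup_le fun k => dom k {n}) (φ.lt_top_singleton n)
      le_union := fun A B =>
        iSup_mono fun k => fmeasE_mono _ Set.subset_union_left
      union_le := fun A B =>
        iSup_le fun k => (fmeasE_union_le _ A B).trans
          (add_le_add (le_iSup (fun k => fmeasE (seq k) A) k)
            (le_iSup (fun k => fmeasE (seq k) B) k)) } with hψdef
  have hψle : ∀ B, ψ.m B ≤ φ.m B := fun B => iSup_le fun k => dom k B
  refine ⟨ψ, ⟨seq, ?_, fun A => rfl⟩, ?_, ?_⟩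
  · -- pairwise disjoint supports
    have haux : ∀ i j, i < j → Disjoint (seq i).support (seq j).support := by
      intro i j hij
      obtain ⟨j', rfl⟩ : ∃ j', j = j' + 1 := ⟨j - 1, by omega⟩
      rw [Finset.disjoint_left]
      intro x hxi hxj
      have h1 : x ≤ sfun i := Finset.le_sup (f := id) hxi
      have h2 : sfun j' < x := gt_step j' x hxj
      have h3 : sfun i ≤ sfun j' := hs_strict.monotone (by omega)
      omega
    intro i j hij
    rcases lt_or_gt_of_ne hij with h | h
    · exact haux i j h
    · exact (haux j i h).symm
  · -- properness of ψ
    intro h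
    have hev : ∀ᶠ n in atTop, ψ.m (Set.univ \ Set.Iic n) < c :=
      h.eventually (gt_mem_nhds hc0)
    obtain ⟨n, hn⟩ := hev.exists
    have hge : c ≤ ψ.m (Set.univ \ Set.Iic n) := by
      have hmem : ∀ x ∈ (seq (n + 1)).support,
          x ∈ (Set.univ \ Set.Iic n : Set ℕ) := fun x hx =>
        ⟨trivial, by simpa using (hsupp_gt n x hx)⟩
      calc c ≤ ∑ x ∈ (seq (n + 1)).support, ((seq (n + 1)) x : ENNReal) :=
              (mass (n + 1)).le
        _ = fmeasE (seq (n + 1)) (Set.univ \ Set.Iic n) :=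
              (fmeasE_eq_total _ hmem).symm
        _ ≤ ψ.m (Set.univ \ Set.Iic n) :=
              le_iSup (fun k => fmeasE (seq k) (Set.univ \ Set.Iic n)) (n + 1)
    exact absurd hn (not_lt.mpr hge)
  · -- inclusion of exhaustive ideals
    intro A hA
    exact tendsto_of_tendsto_of_tendsto_of_le_of_le tendsto_const_nhds hA
      (fun n => zero_le) (fun n => hψle (A \ Set.Iic n))
end
end

section
/- Let φ be a lower semicontinuous submeasure on ω with ω ∉ Exh(φ). The following are equivalent: (1) the space N_{Exh(φ)*} associated to the dual filter Exh(φ)* has the Josefson–Nissenzweig property; (2) the ideal Exh(φ) is not tall; (3) limsup_{n→∞} φ({n}) > 0. -/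
open Filter Topology

noncomputable section

section AuxHelpers

/-- Dependent choice along `ℕ` with full history. -/
noncomputable def depChoice {α : Type*} [Inhabited α] (Q : ℕ → (ℕ → α) → α → Prop)
    (H : ∀ j f, ∃ x, Q j f x) : ℕ → α :=
  Nat.lt_wfRel.wf.fix (fun j rec =>
    Classical.choose (H j (fun i => if h : i < j then rec i h else default)))

theorem depChoice_spec {α : Type*} [Inhabited α] (Q : ℕ → (ℕ → α) → α → Prop)
    (H : ∀ j f, ∃ x, Q j f x)
    (hQ : ∀ j (f g : ℕ → α) x, (∀ i, i < j → f i = g i) → Q j f x → Q j g x) (j : ℕ) :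
    Q j (depChoice Q H) (depChoice Q H j) := by
  have heq : depChoice Q H j = Classical.choose
      (H j (fun i => if h : i < j then depChoice Q H i else default)) := by
    rw [depChoice, WellFounded.fix_eq]
  rw [heq]
  exact hQ j _ _ _ (fun i hi => by simp [hi]) (Classical.choose_spec _)

namespace Submeasure

variable (φ : Submeasure)

theorem mono' {A B : Set ℕ} (h : A ⊆ B) : φ.m A ≤ φ.m B := by
  have := φ.le_union A B
  rwa [Set.union_eq_self_of_subset_left h] at this

theorem exh_mono {A B : Set ℕ} (h : A ⊆ B) (hB : φ.ExhMem B) : φ.ExhMem A := by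
  refine tendsto_of_tendsto_of_tendsto_of_le_of_le tendsto_const_nhds hB
    (fun n => zero_le) (fun n => φ.mono' (Set.diff_subset_diff_left h))

theorem exh_finite {A : Set ℕ} (h : A.Finite) : φ.ExhMem A := by
  obtain ⟨N, hN⟩ := h.bddAbove
  refine Tendsto.congr' ?_ tendsto_const_nhds
  filter_upwards [eventually_ge_atTop N] with n hn
  have he : A \ Set.Iic n = ∅ := by
    ext x
    simp only [Set.mem_diff, Set.mem_Iic, Set.mem_empty_iff_false, iff_false, not_and, not_not]
    exact fun hx => (hN hx).trans hn
  rw [he, φ.empty]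

theorem sum_fin {β : Type*} [DecidableEq β] (t : Finset β) (g : β → Set ℕ) :
    φ.m (⋃ x ∈ t, g x) ≤ ∑ x ∈ t, φ.m (g x) := by
  induction t using Finset.induction with
  | empty => simp [φ.empty]
  | @insert a s ha ih =>
    rw [Finset.set_biUnion_insert, Finset.sum_insert ha]
    exact (φ.union_le _ _).trans (add_le_add le_rfl ih)

end Submeasure

theorem geo_sum_le (J : ℕ) (s : Finset ℕ) (hs : ∀ j ∈ s, J ≤ j) :
    ∑ j ∈ s, (2⁻¹ : ENNReal) ^ j ≤ 2⁻¹ ^ J * 2 := by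
  classical
  have h2 : ∑ i ∈ s.image (fun j => j - J), (fun i => (2⁻¹ : ENNReal) ^ (i + J)) i
      = ∑ j ∈ s, (2⁻¹ : ENNReal) ^ ((j - J) + J) :=
    Finset.sum_image (by intro a ha b hb hab; have ha' := hs a ha; have hb' := hs b hb; simp only at hab; omega)
  have h1 : ∑ j ∈ s, (2⁻¹ : ENNReal) ^ j = ∑ i ∈ s.image (fun j => j - J), 2⁻¹ ^ (i + J) := by
    rw [h2]
    exact Finset.sum_congr rfl fun j hj => by rw [Nat.sub_add_cancel (hs j hj)]
  rw [h1]
  calc ∑ i ∈ s.image (fun j => j - J), (2⁻¹ : ENNReal) ^ (i + J)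
      ≤ ∑' i : ℕ, (2⁻¹ : ENNReal) ^ (i + J) := ENNReal.sum_le_tsum _
    _ = (∑' i : ℕ, (2⁻¹ : ENNReal) ^ i) * 2⁻¹ ^ J := by
        simp_rw [pow_add]; exact ENNReal.tsum_mul_right
    _ = 2⁻¹ ^ J * 2 := by
        rw [ENNReal.tsum_geometric, ENNReal.one_sub_inv_two, inv_inv, mul_comm]

theorem Submeasure.exh_range (φ : Submeasure) (hlsc : φ.LSC) (a : ℕ → ℕ)
    (ha : Function.Injective a) (hsm : ∀ j, φ.m {a j} ≤ 2⁻¹ ^ j) :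
    φ.ExhMem (Set.range a) := by
  classical
  refine ENNReal.tendsto_nhds_zero.2 fun ε hε => ?_
  obtain ⟨J, hJ⟩ : ∃ J : ℕ, (2⁻¹ : ENNReal) ^ J * 2 ≤ ε := by
    have h2 : Filter.Tendsto (fun J : ℕ => (2⁻¹ : ENNReal) ^ J * 2) Filter.atTop (nhds (0 * 2)) :=
      ENNReal.Tendsto.mul_const
        (ENNReal.tendsto_pow_atTop_nhds_zero_of_lt_one (by norm_num)) (Or.inr ENNReal.ofNat_ne_top)
    rw [zero_mul] at h2
    exact (ENNReal.tendsto_nhds_zero.1 h2 ε hε).exists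
  filter_upwards [Filter.eventually_ge_atTop ((Finset.range J).sup a)] with n hn
  refine le_of_tendsto (hlsc _) (Filter.Eventually.of_forall fun m => ?_)
  have hfin : {j : ℕ | a j ≤ m}.Finite :=
    Set.Finite.preimage ha.injOn (Set.finite_Iic m)
  set T := hfin.toFinset.filter (fun j => J ≤ j) with hT
  have hsub : (Set.range a \ Set.Iic n) ∩ Set.Iic m ⊆ ⋃ j ∈ T, {a j} := by
    rintro x ⟨⟨⟨j, rfl⟩, hx2⟩, hx3⟩
    simp only [Set.mem_Iic] at hx2 hx3
    have hjJ : J ≤ j := by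
      by_contra hlt
      exact hx2 (le_trans (Finset.le_sup (Finset.mem_range.2 (not_le.1 hlt))) hn)
    have hjT : j ∈ T := by
      rw [hT, Finset.mem_filter, Set.Finite.mem_toFinset]
      exact ⟨hx3, hjJ⟩
    exact Set.mem_biUnion hjT rfl
  calc φ.m ((Set.range a \ Set.Iic n) ∩ Set.Iic m)
      ≤ φ.m (⋃ j ∈ T, {a j}) := φ.mono' hsub
    _ ≤ ∑ j ∈ T, φ.m {a j} := φ.sum_fin T _
    _ ≤ ∑ j ∈ T, (2⁻¹ : ENNReal) ^ j := Finset.sum_le_sum fun j _ => hsm j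
    _ ≤ 2⁻¹ ^ J * 2 := geo_sum_le J T (fun j hj => (Finset.mem_filter.1 hj).2)
    _ ≤ ε := hJ

theorem mIntg_eq_sum {X : Type*} (μ : X →₀ ℝ) (f : X → ℝ) (s : Finset X)
    (h : μ.support ⊆ s) : mIntg μ f = ∑ x ∈ s, μ x * f x :=
  Finset.sum_subset h (fun x _ hx => by rw [Finsupp.notMem_support_iff.1 hx, zero_mul])

theorem mnorm_split (μ : Option ℕ →₀ ℝ) :
    mnorm μ = |μ none| + ∑ x ∈ μ.support.erase none, |μ x| := by
  classical
  by_cases h : none ∈ μ.support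
  · rw [mnorm, ← Finset.add_sum_erase _ _ h]
  · rw [mnorm, Finset.erase_eq_of_notMem h, Finsupp.notMem_support_iff.1 h, abs_zero, zero_add]

theorem mIntg_one_split (μ : Option ℕ →₀ ℝ) :
    mIntg μ (fun _ => 1) = μ none + ∑ x ∈ μ.support.erase none, μ x := by
  classical
  have : mIntg μ (fun _ => 1) = ∑ x ∈ μ.support, μ x := by
    rw [mIntg]; exact Finset.sum_congr rfl fun x _ => mul_one _
  rw [this]
  by_cases h : none ∈ μ.support
  · rw [← Finset.add_sum_erase _ _ h]
  · rw [Finset.erase_eq_of_notMem h, Finsupp.notMem_support_iff.1 h, zero_add]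

theorem nf_continuous_of_zero {F : Filter ℕ} (f : Option ℕ → ℝ) (h0 : f none = 0)
    (hC : {a : ℕ | f (some a) ≠ 0}ᶜ ∈ F) : @Continuous _ _ (NFtop F) _ f := by
  letI := NFtop F
  rw [continuous_def]
  intro U hU
  show none ∈ f ⁻¹' U → {a : ℕ | some a ∈ f ⁻¹' U} ∈ F
  intro hnone
  refine Filter.mem_of_superset hC fun a ha => ?_
  simp only [Set.mem_compl_iff, Set.mem_setOf_eq, not_not] at ha
  show f (some a) ∈ U
  rw [ha]
  rw [Set.mem_preimage, h0] at hnone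
  exact hnone

theorem nf_mem_of_continuous {F : Filter ℕ} (f : Option ℕ → ℝ)
    (hf : @Continuous _ _ (NFtop F) _ f) {ε : ℝ} (hε : 0 < ε) :
    {a : ℕ | |f (some a) - f none| < ε} ∈ F := by
  letI := NFtop F
  have hU : IsOpen (f ⁻¹' Metric.ball (f none) ε) :=
    hf.isOpen_preimage _ Metric.isOpen_ball
  have hmem : {a : ℕ | some a ∈ f ⁻¹' Metric.ball (f none) ε} ∈ F := by
    refine hU ?_
    show f none ∈ Metric.ball (f none) ε
    simpa using hε
  refine Filter.mem_of_superset hmem fun a ha => ?_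
  simp only [Set.mem_setOf_eq, Set.mem_preimage, Metric.mem_ball, Real.dist_eq] at ha ⊢
  exact ha

/-- The measure `½ δ_{some a} - ½ δ_{none}`. -/
noncomputable def pairMeas (a : ℕ) : Option ℕ →₀ ℝ :=
  Finsupp.single (some a) 2⁻¹ + Finsupp.single none (-2⁻¹)

theorem pairMeas_support (a : ℕ) : (pairMeas a).support = {some a, none} := by
  classical
  rw [pairMeas, Finsupp.support_add_eq]
  · rw [Finsupp.support_single_ne_zero _ (by norm_num),
      Finsupp.support_single_ne_zero _ (by norm_num)]
    rfl
  · rw [Finsupp.support_single_ne_zero _ (by norm_num),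
      Finsupp.support_single_ne_zero _ (by norm_num)]
    simp

theorem pairMeas_apply_some (a : ℕ) : pairMeas a (some a) = 2⁻¹ := by
  simp [pairMeas, Finsupp.single_apply]

theorem pairMeas_apply_none (a : ℕ) : pairMeas a none = -2⁻¹ := by
  simp [pairMeas, Finsupp.single_apply]

theorem pairMeas_mnorm (a : ℕ) : mnorm (pairMeas a) = 1 := by
  rw [mnorm, pairMeas_support, Finset.sum_pair (by simp : (some a : Option ℕ) ≠ none),
    pairMeas_apply_some, pairMeas_apply_none]
  rw [abs_of_pos (by norm_num), abs_of_neg (by norm_num)]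
  norm_num

theorem pairMeas_mIntg (a : ℕ) (f : Option ℕ → ℝ) :
    mIntg (pairMeas a) f = 2⁻¹ * f (some a) + -2⁻¹ * f none := by
  rw [mIntg_eq_sum _ f {some a, none} (by rw [pairMeas_support]),
    Finset.sum_pair (by simp : (some a : Option ℕ) ≠ none),
    pairMeas_apply_some, pairMeas_apply_none]

end AuxHelpers


/-- For an lsc submeasure `φ` with `ω ∉ Exh(φ)`, the following are equivalent:
(1) `N_{Exh(φ)*}` has the JNP; (2) `Exh(φ)` is not tall;
(3) `limsup_n φ({n}) > 0`. -/
theorem stmt9 (φ : Submeasure) (hlsc : φ.LSC) (hproper : ¬ φ.ExhMem Set.univ)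
    (F : Filter ℕ) (hdual : ∀ A : Set ℕ, A ∈ F ↔ φ.ExhMem Aᶜ) :
    [JNP (NFtop F),
     ¬ (∀ X : Set ℕ, X.Infinite → ∃ B : Set ℕ, B ⊆ X ∧ B.Infinite ∧ φ.ExhMem B),
     0 < Filter.limsup (fun n : ℕ => φ.m {n}) atTop].TFAE := by
  classical
  -- key finiteness lemma: an `Exh` set contains only finitely many `φ`-big singletons
  have hkey : ∀ c : ENNReal, 0 < c → ∀ D : Set ℕ, φ.ExhMem D →
      {n : ℕ | n ∈ D ∧ c < φ.m {n}}.Finite := by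
    intro c hc0 D hD
    by_contra hinf
    replace hinf : {n : ℕ | n ∈ D ∧ c < φ.m {n}}.Infinite := hinf
    have hev : ∀ᶠ n in atTop, φ.m (D \ Set.Iic n) < c := by
      have := Filter.mem_map.1 (hD (Iio_mem_nhds hc0))
      simpa [Set.preimage, Set.mem_Iio] using this
    obtain ⟨n₀, hn₀⟩ := Filter.eventually_atTop.1 hev
    obtain ⟨b, hb, hbgt⟩ := hinf.exists_gt n₀
    have h1 : φ.m {b} ≤ φ.m (D \ Set.Iic n₀) := by
      refine φ.mono' ?_
      intro x hx
      rw [Set.mem_singleton_iff] at hx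
      subst hx
      exact ⟨hb.1, by simp only [Set.mem_Iic]; omega⟩
    exact absurd (lt_of_le_of_lt h1 (hn₀ n₀ le_rfl)) (not_lt.2 hb.2.le)
  -- the infinite set of big singletons, given `0 < limsup`
  have hbig : ∀ c : ENNReal, c < Filter.limsup (fun n : ℕ => φ.m {n}) atTop →
      {n : ℕ | c < φ.m {n}}.Infinite := by
    intro c hcL
    rw [← Nat.frequently_atTop_iff_infinite]
    exact Filter.frequently_lt_of_lt_limsup (by isBoundedDefault) hcL
  -- from `¬ (3)`, singleton masses tend to zero
  have hsmall_of : ¬ (0 < Filter.limsup (fun n : ℕ => φ.m {n}) atTop) →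
      Tendsto (fun n : ℕ => φ.m {n}) atTop (nhds 0) := by
    intro h3
    have hlim : Filter.limsup (fun n : ℕ => φ.m {n}) atTop = 0 :=
      le_antisymm (not_lt.1 h3) zero_le
    refine ENNReal.tendsto_nhds_zero.2 fun ε hε => ?_
    have hlt : Filter.limsup (fun n : ℕ => φ.m {n}) atTop < ε := by rw [hlim]; exact hε
    exact (Filter.eventually_lt_of_limsup_lt hlt).mono fun n h => h.le
  tfae_have 3 → 2 := by
    intro h3 htall
    obtain ⟨c, hc0, hcL⟩ := exists_between h3
    have hX := hbig c hcL
    obtain ⟨B, hBX, hBinf, hBexh⟩ := htall _ hX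
    have : B.Finite := by
      have h1 := hkey c hc0 B hBexh
      refine h1.subset fun b hb => ⟨hb, hBX hb⟩
    exact hBinf this
  tfae_have 2 → 3 := by
    intro h2
    by_contra h3
    apply h2
    intro X hX
    have hsm := hsmall_of h3
    have hN : ∀ j : ℕ, ∃ N, ∀ n ≥ N, φ.m {n} ≤ (2⁻¹ : ENNReal) ^ j := by
      intro j
      have hp : (0 : ENNReal) < 2⁻¹ ^ j :=
        ENNReal.pow_pos (ENNReal.inv_pos.mpr ENNReal.ofNat_ne_top) j
      exact Filter.eventually_atTop.1 (ENNReal.tendsto_nhds_zero.1 hsm _ hp)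
    choose N hNs using hN
    obtain ⟨b, hb⟩ : ∃ b : ℕ → ℕ, ∀ j, b j ∈ X ∧ N j ≤ b j ∧ ∀ i, i < j → b i < b j := by
      set Q : ℕ → (ℕ → ℕ) → ℕ → Prop :=
        fun j hist x => x ∈ X ∧ N j ≤ x ∧ ∀ i, i < j → hist i < x with hQdef
      have hex : ∀ j hist, ∃ x, Q j hist x := by
        intro j hist
        obtain ⟨x, hxX, hx⟩ := hX.exists_gt (max (N j) ((Finset.range j).sup hist))
        refine ⟨x, hxX, le_of_lt (lt_of_le_of_lt (le_max_left _ _) hx), fun i hi => ?_⟩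
        exact lt_of_le_of_lt (le_trans (Finset.le_sup (Finset.mem_range.2 hi)) (le_max_right _ _)) hx
      have hcompat : ∀ j (f g : ℕ → ℕ) x, (∀ i, i < j → f i = g i) → Q j f x → Q j g x := by
        rintro j f g x hfg ⟨h1, h2, h3⟩
        exact ⟨h1, h2, fun i hi => hfg i hi ▸ h3 i hi⟩
      exact ⟨depChoice Q hex, fun j => depChoice_spec Q hex hcompat j⟩
    have hbinj : Function.Injective b := by
      intro i j hij
      rcases lt_trichotomy i j with h | h | h
      · exact absurd hij (ne_of_lt ((hb j).2.2 i h))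
      · exact h
      · exact absurd hij.symm (ne_of_lt ((hb i).2.2 j h))
    refine ⟨Set.range b, ?_, Set.infinite_range_of_injective hbinj, ?_⟩
    · rintro x ⟨j, rfl⟩; exact (hb j).1
    · exact φ.exh_range hlsc b hbinj fun j => hNs j (b j) (hb j).2.1
  tfae_have 3 → 1 := by
    intro h3
    obtain ⟨c, hc0, hcL⟩ := exists_between h3
    have hX := hbig c hcL
    set e := hX.natEmbedding with he
    refine ⟨fun n => pairMeas (e n), fun n => pairMeas_mnorm _, ?_⟩
    intro f hf
    rw [Metric.tendsto_atTop]
    intro ε hε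
    have hA : {a : ℕ | |f (some a) - f none| < ε} ∈ F := nf_mem_of_continuous f hf hε
    have hAc : φ.ExhMem {a : ℕ | |f (some a) - f none| < ε}ᶜ := (hdual _).1 hA
    have hfin : {n : ℕ | n ∈ {a : ℕ | |f (some a) - f none| < ε}ᶜ ∧ c < φ.m {n}}.Finite :=
      hkey c hc0 _ hAc
    have hginj : Function.Injective (fun n => ((e n : ℕ))) :=
      Subtype.coe_injective.comp e.injective
    have hpre : {n : ℕ | ((e n : ℕ)) ∈
        {m : ℕ | m ∈ {a : ℕ | |f (some a) - f none| < ε}ᶜ ∧ c < φ.m {m}}}.Finite :=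
      hfin.preimage hginj.injOn
    obtain ⟨Nb, hNb⟩ := hpre.bddAbove
    refine ⟨Nb + 1, fun n hn => ?_⟩
    have hnotin : ((e n : ℕ)) ∉
        {m : ℕ | m ∈ {a : ℕ | |f (some a) - f none| < ε}ᶜ ∧ c < φ.m {m}} := by
      intro hmem
      have : n ≤ Nb := hNb hmem
      omega
    have hbig' : c < φ.m {((e n : ℕ))} := (e n).2
    have hdlt : |f (some ((e n : ℕ))) - f none| < ε := by
      by_contra hcon
      exact hnotin ⟨fun hc' => hcon hc', hbig'⟩
    rw [Real.dist_eq, sub_zero, pairMeas_mIntg]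
    have heq : 2⁻¹ * f (some ((e n : ℕ))) + -2⁻¹ * f none
        = 2⁻¹ * (f (some ((e n : ℕ))) - f none) := by ring
    rw [heq, abs_mul, abs_of_pos (by norm_num : (0:ℝ) < 2⁻¹)]
    nlinarith [abs_nonneg (f (some ((e n : ℕ))) - f none)]
  tfae_have 1 → 3 := by
    intro h1
    by_contra h3
    obtain ⟨μ, hnm, hcv⟩ := h1
    have hsm := hsmall_of h3
    have hNfun : ∀ j : ℕ, ∃ N, ∀ n ≥ N, φ.m {n} ≤ (2⁻¹ : ENNReal) ^ j := by
      intro j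
      have hp : (0 : ENNReal) < 2⁻¹ ^ j :=
        ENNReal.pow_pos (ENNReal.inv_pos.mpr ENNReal.ofNat_ne_top) j
      exact Filter.eventually_atTop.1 (ENNReal.tendsto_nhds_zero.1 hsm _ hp)
    choose N hNs using hNfun
    -- (A): integrals against functions supported on an `Exh` set tend to zero
    have hA : ∀ C : Set ℕ, φ.ExhMem C → ∀ f : Option ℕ → ℝ, f none = 0 →
        (∀ a : ℕ, a ∉ C → f (some a) = 0) →
        Tendsto (fun k => mIntg (μ k) f) atTop (nhds 0) := by
      intro C hC f h0 hsupp
      refine hcv f (nf_continuous_of_zero f h0 ((hdual _).2 ?_))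
      rw [compl_compl]
      refine φ.exh_mono ?_ hC
      intro a ha
      by_contra h
      exact ha (hsupp a h)
    -- (B): point masses tend to zero
    have hB : ∀ a : ℕ, Tendsto (fun k => μ k (some a)) atTop (nhds 0) := by
      intro a
      have h0 := hA {a} (φ.exh_finite (Set.finite_singleton a))
        (fun x => if x = some a then 1 else 0) (by simp)
        (fun b hb => by
          simp only [Set.mem_singleton_iff] at hb
          simp only [Option.some.injEq]
          rw [if_neg (by exact fun h => hb h)])
      refine h0.congr fun k => ?_
      have h1 : mIntg (μ k) (fun x => if x = some a then (1:ℝ) else 0)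
          = ∑ x ∈ (μ k).support, if x = some a then μ k x else 0 := by
        rw [mIntg]
        refine Finset.sum_congr rfl fun x _ => ?_
        split <;> simp
      rw [h1, Finset.sum_ite_eq' (μ k).support (some a) (fun x => μ k x)]
      split
      · rfl
      · exact (Finsupp.notMem_support_iff.1 (by assumption)).symm
    have hBabs : ∀ a : ℕ, Tendsto (fun k => |μ k (some a)|) atTop (nhds 0) := by
      intro a
      simpa using (hB a).abs
    have hC2 : ∀ s : Finset ℕ, Tendsto (fun k => ∑ a ∈ s, |μ k (some a)|) atTop (nhds 0) := by
      intro s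
      have := tendsto_finset_sum s (fun a (_ : a ∈ s) => hBabs a)
      simpa using this
    have hD : Tendsto (fun k => mIntg (μ k) (fun _ => (1:ℝ))) atTop (nhds 0) :=
      hcv _ (by letI := NFtop F; exact continuous_const)
    -- (E): eventually at least 1/4 of the mass lives on ω
    have hE : ∀ᶠ k in atTop, (1:ℝ)/4 ≤ ∑ x ∈ (μ k).support.erase none, |μ k x| := by
      have habs : Tendsto (fun k => |mIntg (μ k) (fun _ => (1:ℝ))|) atTop (nhds 0) := by
        simpa using hD.abs
      have h12 : ∀ᶠ k in atTop, |mIntg (μ k) (fun _ => (1:ℝ))| < 1/2 :=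
        habs.eventually_lt_const (by norm_num)
      filter_upwards [h12] with k hk
      have h1 := hnm k
      rw [mnorm_split] at h1
      have h2 := mIntg_one_split (μ k)
      have h3' : |∑ x ∈ (μ k).support.erase none, μ k x|
          ≤ ∑ x ∈ (μ k).support.erase none, |μ k x| := Finset.abs_sum_le_sum_abs _ _
      have h4 : |μ k none| ≤ |mIntg (μ k) (fun _ => (1:ℝ))|
          + |∑ x ∈ (μ k).support.erase none, μ k x| := by
        have heq : μ k none = mIntg (μ k) (fun _ => (1:ℝ))
            - ∑ x ∈ (μ k).support.erase none, μ k x := by linarith [h2]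
        rw [heq]
        exact abs_sub _ _
      linarith [abs_nonneg (μ k none)]
    -- the recursive construction
    obtain ⟨p, hp⟩ : ∃ p : ℕ → ℕ × ℕ, ∀ j,
        j ≤ (p j).1 ∧ μ (p j).1 (some (p j).2) ≠ 0 ∧ φ.m {(p j).2} ≤ (2⁻¹ : ENNReal) ^ j ∧
        (∀ i, i < j → some (p j).2 ∉ (μ (p i).1).support) ∧
        (∀ i, i < j → |μ (p j).1 (some (p i).2)| * (2 / |μ (p i).1 (some (p i).2)|)
          ≤ (2⁻¹ : ℝ) ^ (j + i)) := by
      set Q : ℕ → (ℕ → ℕ × ℕ) → ℕ × ℕ → Prop := fun j hist q =>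
        j ≤ q.1 ∧ μ q.1 (some q.2) ≠ 0 ∧ φ.m {q.2} ≤ (2⁻¹ : ENNReal) ^ j ∧
        (∀ i, i < j → some q.2 ∉ (μ (hist i).1).support) ∧
        (∀ i, i < j → |μ q.1 (some (hist i).2)| * (2 / |μ (hist i).1 (some (hist i).2)|)
          ≤ (2⁻¹ : ℝ) ^ (j + i)) with hQdef
      have hcompat : ∀ j (f g : ℕ → ℕ × ℕ) x, (∀ i, i < j → f i = g i) → Q j f x → Q j g x := by
        rintro j f g x hfg ⟨h1', h2', h3', h4', h5'⟩
        exact ⟨h1', h2', h3', fun i hi => hfg i hi ▸ h4' i hi, fun i hi => hfg i hi ▸ h5' i hi⟩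
      have hex : ∀ j hist, ∃ q, Q j hist q := by
        intro j hist
        set S : Finset ℕ := Finset.range (N j) ∪
          (Finset.range j).biUnion (fun i => (μ (hist i).1).support.preimage some
            (Option.some_injective ℕ).injOn) with hSdef
        have ev1 : ∀ᶠ k in atTop, j ≤ k := eventually_ge_atTop j
        have ev3 : ∀ᶠ k in atTop, ∑ x ∈ S, |μ k (some x)| < 1/8 :=
          (hC2 S).eventually_lt_const (by norm_num)
        have ev4 : ∀ᶠ k in atTop, ∀ i ∈ Finset.range j,
            |μ k (some (hist i).2)| * (2 / |μ (hist i).1 (some (hist i).2)|)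
              ≤ (2⁻¹ : ℝ) ^ (j + i) := by
          rw [eventually_all_finset]
          intro i _
          rcases eq_or_ne (μ (hist i).1 (some (hist i).2)) 0 with hz | hz
          · refine Filter.Eventually.of_forall fun k => ?_
            rw [hz]
            simp only [abs_zero, div_zero, mul_zero]
            positivity
          · have hbpos : (0:ℝ) < (2⁻¹ : ℝ) ^ (j + i) := by positivity
            have htm := (hBabs (hist i).2).mul_const (2 / |μ (hist i).1 (some (hist i).2)|)
            rw [zero_mul] at htm
            exact (htm.eventually_lt_const hbpos).mono fun k hk => hk.le
        obtain ⟨k, hk1, hkE, hk3, hk4⟩ := (ev1.and (hE.and (ev3.and ev4))).exists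
        have himg : ∑ y ∈ S.image some, |μ k y| < 1/8 := by
          rw [Finset.sum_image (fun a _ b _ h => Option.some_injective ℕ h)]
          exact hk3
        have hex_a : ∃ y ∈ (μ k).support.erase none, y ∉ S.image some := by
          by_contra hco
          push_neg at hco
          have hle : ∑ x ∈ (μ k).support.erase none, |μ k x| ≤ ∑ y ∈ S.image some, |μ k y| :=
            Finset.sum_le_sum_of_subset_of_nonneg hco (fun _ _ _ => abs_nonneg _)
          linarith
        obtain ⟨y, hy, hyS⟩ := hex_a
        obtain ⟨hynone, hysupp⟩ := Finset.mem_erase.1 hy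
        obtain ⟨a, rfl⟩ := Option.ne_none_iff_exists'.1 hynone
        have haS : a ∉ S := fun h => hyS (Finset.mem_image_of_mem some h)
        refine ⟨(k, a), hk1, Finsupp.mem_support_iff.1 hysupp, ?_, ?_, ?_⟩
        · refine hNs j a ?_
          by_contra hlt
          exact haS (Finset.mem_union_left _ (Finset.mem_range.2 (by omega)))
        · intro i hi hmem
          refine haS (Finset.mem_union_right _ ?_)
          exact Finset.mem_biUnion.2 ⟨i, Finset.mem_range.2 hi, Finset.mem_preimage.2 hmem⟩
        · intro i hi
          exact hk4 i (Finset.mem_range.2 hi)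
      exact ⟨depChoice Q hex, fun j => depChoice_spec Q hex hcompat j⟩
    have hk_ge : ∀ j, j ≤ (p j).1 := fun j => (hp j).1
    have hne : ∀ j, μ (p j).1 (some (p j).2) ≠ 0 := fun j => (hp j).2.1
    have hφa : ∀ j, φ.m {(p j).2} ≤ (2⁻¹ : ENNReal) ^ j := fun j => (hp j).2.2.1
    have hnotin : ∀ i j, i < j → some (p j).2 ∉ (μ (p i).1).support :=
      fun i j h => (hp j).2.2.2.1 i h
    have hcross : ∀ j i, i < j →
        |μ (p j).1 (some (p i).2)| * (2 / |μ (p i).1 (some (p i).2)|) ≤ (2⁻¹ : ℝ) ^ (j + i) :=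
      fun j i h => (hp j).2.2.2.2 i h
    have hinj : Function.Injective (fun j => (p j).2) := by
      intro i j hij
      simp only at hij
      rcases lt_trichotomy i j with h | h | h
      · exact absurd (hij ▸ Finsupp.mem_support_iff.2 (hne i)) (hnotin i j h)
      · exact h
      · exact absurd (hij.symm ▸ Finsupp.mem_support_iff.2 (hne j)) (hnotin j i h)
    have hZ : φ.ExhMem (Set.range (fun j => (p j).2)) :=
      φ.exh_range hlsc _ hinj hφa
    obtain ⟨f, hf_none, hf_not, hf_at⟩ : ∃ f : Option ℕ → ℝ, f none = 0 ∧
        (∀ b : ℕ, b ∉ Set.range (fun j => (p j).2) → f (some b) = 0) ∧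
        (∀ j, f (some ((p j).2)) = 2 / μ (p j).1 (some ((p j).2))) := by
      refine ⟨fun x => Option.casesOn x 0 (fun b =>
          if h : b ∈ Set.range (fun j => (p j).2)
          then 2 / μ (p (Classical.choose h)).1 (some b) else 0),
        rfl, fun b hb => dif_neg hb, fun j => ?_⟩
      have hmem : (p j).2 ∈ Set.range (fun j => (p j).2) := ⟨j, rfl⟩
      show (if h : (p j).2 ∈ Set.range (fun j => (p j).2)
          then 2 / μ (p (Classical.choose h)).1 (some ((p j).2)) else 0) = _
      rw [dif_pos hmem]
      have hcs : (fun j => (p j).2) (Classical.choose hmem) = (fun j => (p j).2) j :=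
        Classical.choose_spec hmem
      rw [hinj hcs]
    have htend : Tendsto (fun k => mIntg (μ k) f) atTop (nhds 0) :=
      hA _ hZ f hf_none hf_not
    have hkmono : Tendsto (fun j => (p j).1) atTop atTop :=
      tendsto_atTop_mono hk_ge tendsto_id
    have hsubseq : Tendsto (fun j => mIntg (μ (p j).1) f) atTop (nhds 0) := htend.comp hkmono
    have hlow : ∀ j, 1 ≤ j → 1 ≤ mIntg (μ (p j).1) f := by
      intro j hj
      have hsupp_mem : some ((p j).2) ∈ (μ (p j).1).support := Finsupp.mem_support_iff.2 (hne j)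
      rw [mIntg, ← Finset.add_sum_erase _ _ hsupp_mem]
      have hterm : μ (p j).1 (some ((p j).2)) * f (some ((p j).2)) = 2 := by
        rw [hf_at j, mul_comm, div_mul_cancel₀]
        exact hne j
      rw [hterm]
      have hzero : ∀ x ∈ ((μ (p j).1).support.erase (some ((p j).2))),
          x ∉ (Finset.range j).image (fun i => (some ((p i).2) : Option ℕ)) →
          μ (p j).1 x * f x = 0 := by
        intro x hxE hxI
        rcases x with _ | b
        · rw [hf_none, mul_zero]
        · rcases Classical.em (b ∈ Set.range (fun j => (p j).2)) with hb | hb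
          · obtain ⟨i, rfl⟩ := hb
            rcases lt_trichotomy i j with h | h | h
            · exact absurd (Finset.mem_image.2 ⟨i, Finset.mem_range.2 h, rfl⟩) hxI
            · subst h
              exact absurd rfl (Finset.mem_erase.1 hxE).1
            · exact absurd (Finset.mem_of_mem_erase hxE) (hnotin j i h)
          · rw [hf_not b hb, mul_zero]
      have hrest : |∑ x ∈ ((μ (p j).1).support.erase (some ((p j).2))), μ (p j).1 x * f x|
          ≤ 1 := by
        calc |∑ x ∈ ((μ (p j).1).support.erase (some ((p j).2))), μ (p j).1 x * f x|
            ≤ ∑ x ∈ ((μ (p j).1).support.erase (some ((p j).2))), |μ (p j).1 x * f x| :=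
              Finset.abs_sum_le_sum_abs _ _
          _ = ∑ x ∈ ((μ (p j).1).support.erase (some ((p j).2))).filter
                (fun x => x ∈ (Finset.range j).image (fun i => (some ((p i).2) : Option ℕ))),
                |μ (p j).1 x * f x| := by
              symm
              refine Finset.sum_filter_of_ne ?_
              intro x hx hne'
              by_contra hxI
              exact hne' (by rw [hzero x hx hxI, abs_zero])
          _ ≤ ∑ x ∈ (Finset.range j).image (fun i => (some ((p i).2) : Option ℕ)),
                |μ (p j).1 x * f x| :=
              Finset.sum_le_sum_of_subset_of_nonneg
                (fun x hx => (Finset.mem_filter.1 hx).2) (fun _ _ _ => abs_nonneg _)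
          _ = ∑ i ∈ Finset.range j, |μ (p j).1 (some ((p i).2)) * f (some ((p i).2))| := by
              refine Finset.sum_image ?_
              intro x _ y _ hxy
              exact hinj (Option.some_injective ℕ hxy)
          _ ≤ ∑ i ∈ Finset.range j, (2⁻¹ : ℝ) ^ (j + i) := by
              refine Finset.sum_le_sum fun i hi => ?_
              rw [hf_at i, abs_mul, abs_div, abs_two]
              exact hcross j i (Finset.mem_range.1 hi)
          _ = (2⁻¹ : ℝ) ^ j * ∑ i ∈ Finset.range j, (2⁻¹ : ℝ) ^ i := by
              rw [Finset.mul_sum]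
              exact Finset.sum_congr rfl fun i _ => pow_add _ _ _
          _ ≤ (2⁻¹ : ℝ) ^ 1 * 2 := by
              have hgeo : ∑ i ∈ Finset.range j, (2⁻¹ : ℝ) ^ i ≤ 2 := by
                have := sum_geometric_two_le j
                simpa [one_div] using this
              have hpow : (2⁻¹ : ℝ) ^ j ≤ (2⁻¹ : ℝ) ^ 1 :=
                pow_le_pow_of_le_one (by norm_num) (by norm_num) hj
              have hsumnn : (0:ℝ) ≤ ∑ i ∈ Finset.range j, (2⁻¹ : ℝ) ^ i :=
                Finset.sum_nonneg fun i _ => by positivity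
              nlinarith
          _ = 1 := by norm_num
      have hnegabs := neg_abs_le (∑ x ∈ ((μ (p j).1).support.erase (some ((p j).2))),
        μ (p j).1 x * f x)
      linarith
    obtain ⟨j, hj1, hj2⟩ :=
      ((hsubseq.eventually_lt_const (by norm_num : (0:ℝ) < 1)).and (eventually_ge_atTop 1)).exists
    exact absurd (hlow j hj2) (not_le.2 hj1)
  tfae_finish
end
end

section
/- Let F₀ and F₁ be free filters on ω and let F₀ ⊕ F₁ be their free sum. Then the space N_{F₀⊕F₁} has the Josefson–Nissenzweig property if and only if N_{F₀} has it or N_{F₁} has it; and N_{F₀⊕F₁} has the bounded Josefson–Nissenzweig property if and only if N_{F₀} has it or N_{F₁} has it. -/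
open Filter Topology

noncomputable section

/-- The free sum `F₀ ⊕ F₁` of two free filters on `ω`, realized as a filter on the
disjoint sum `ℕ ⊕ ℕ` (a copy of `ω × {0,1}`): its members are exactly the sets
`(A₀ × {0}) ∪ (A₁ × {1})` with `A₀ ∈ F₀`, `A₁ ∈ F₁` together with their supersets,
i.e. the sets `A` with `Sum.inl ⁻¹' A ∈ F₀` and `Sum.inr ⁻¹' A ∈ F₁`. -/
def freeSum (F₀ F₁ : Filter ℕ) : Filter (ℕ ⊕ ℕ) :=
  Filter.map Sum.inl F₀ ⊔ Filter.map Sum.inr F₁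

/-! ### auxiliary lemmas -/

lemma NFtop_isOpen_iff {α : Type*} (F : Filter α) (U : Set (Option α)) :
    IsOpen[NFtop F] U ↔ (none ∈ U → {a : α | some a ∈ U} ∈ F) := Iff.rfl

lemma mnorm_nonneg {X : Type*} (μ : X →₀ ℝ) : 0 ≤ mnorm μ :=
  Finset.sum_nonneg fun _ _ => abs_nonneg _

lemma mnorm_smul {X : Type*} (r : ℝ) (μ : X →₀ ℝ) : mnorm (r • μ) = |r| * mnorm μ := by
  rcases eq_or_ne r 0 with rfl | hr
  · simp [mnorm]
  · unfold mnorm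
    rw [Finsupp.support_smul_eq hr, Finset.mul_sum]
    exact Finset.sum_congr rfl fun x _ => by
      rw [Finsupp.smul_apply, smul_eq_mul, abs_mul]

lemma mIntg_smul {X : Type*} (r : ℝ) (μ : X →₀ ℝ) (f : X → ℝ) :
    mIntg (r • μ) f = r * mIntg μ f := by
  rcases eq_or_ne r 0 with rfl | hr
  · simp [mIntg]
  · unfold mIntg
    rw [Finsupp.support_smul_eq hr, Finset.mul_sum]
    exact Finset.sum_congr rfl fun x _ => by
      rw [Finsupp.smul_apply, smul_eq_mul, mul_assoc]

lemma mnorm_embDomain {X Y : Type*} (e : X ↪ Y) (μ : X →₀ ℝ) :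
    mnorm (Finsupp.embDomain e μ) = mnorm μ := by
  unfold mnorm
  rw [Finsupp.support_embDomain, Finset.sum_map]
  exact Finset.sum_congr rfl fun x _ => by rw [Finsupp.embDomain_apply_self]

lemma mIntg_embDomain {X Y : Type*} (e : X ↪ Y) (μ : X →₀ ℝ) (f : Y → ℝ) :
    mIntg (Finsupp.embDomain e μ) f = mIntg μ (f ∘ e) := by
  unfold mIntg
  rw [Finsupp.support_embDomain, Finset.sum_map]
  exact Finset.sum_congr rfl fun x _ => by rw [Finsupp.embDomain_apply_self]; rfl

lemma mIntg_mapDomain {X Y : Type*} (g : X → Y) (μ : X →₀ ℝ) (f : Y → ℝ) :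
    mIntg (Finsupp.mapDomain g μ) f = mIntg μ (f ∘ g) := by
  show (Finsupp.mapDomain g μ).sum (fun y c => c * f y) = μ.sum (fun x c => c * f (g x))
  exact Finsupp.sum_mapDomain_index (fun b => zero_mul _) (fun b m₁ m₂ => add_mul _ _ _)

lemma mnorm_single {X : Type*} (a : X) (r : ℝ) : mnorm (Finsupp.single a r) = |r| := by
  rcases eq_or_ne r 0 with rfl | hr
  · simp [mnorm]
  · unfold mnorm
    rw [Finsupp.support_single_ne_zero a hr, Finset.sum_singleton, Finsupp.single_eq_same]

lemma mnorm_add_of_disjoint {X : Type*} (μ ν : X →₀ ℝ) (h : Disjoint μ.support ν.support) :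
    mnorm (μ + ν) = mnorm μ + mnorm ν := by
  classical
  unfold mnorm
  rw [Finsupp.support_add_eq h, Finset.sum_union h]
  congr 1
  · exact Finset.sum_congr rfl fun x hx => by
      rw [Finsupp.add_apply,
        Finsupp.notMem_support_iff.mp (Finset.disjoint_left.mp h hx), add_zero]
  · exact Finset.sum_congr rfl fun x hx => by
      rw [Finsupp.add_apply,
        Finsupp.notMem_support_iff.mp (Finset.disjoint_right.mp h hx), zero_add]

lemma mapDomain_const {α β : Type*} (b : β) (v : α →₀ ℝ) :
    Finsupp.mapDomain (fun _ => b) v = Finsupp.single b (v.sum fun _ c => c) := by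
  rw [Finsupp.mapDomain]
  rw [show (Finsupp.single b (v.sum fun _ c => c)) = Finsupp.singleAddHom b (v.sum fun _ c => c) from rfl]
  rw [map_finsuppSum]
  rfl

lemma abs_total_le {α : Type*} (v : α →₀ ℝ) : |v.sum fun _ c => c| ≤ mnorm v :=
  Finset.abs_sum_le_sum_abs _ _

/-! ### maps between the spaces -/

def r₀ : Option (ℕ ⊕ ℕ) → Option ℕ := fun x =>
  match x with
  | some (Sum.inl a) => some a
  | some (Sum.inr _) => none
  | none => none

def r₁ : Option (ℕ ⊕ ℕ) → Option ℕ := fun x =>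
  match x with
  | some (Sum.inr a) => some a
  | some (Sum.inl _) => none
  | none => none

def e₀ : Option ℕ ↪ Option (ℕ ⊕ ℕ) :=
  ⟨Option.map Sum.inl, Option.map_injective Sum.inl_injective⟩

def e₁ : Option ℕ ↪ Option (ℕ ⊕ ℕ) :=
  ⟨Option.map Sum.inr, Option.map_injective Sum.inr_injective⟩

def j₀ : ℕ ↪ Option (ℕ ⊕ ℕ) := ⟨fun a => some (Sum.inl a), fun a b h => by simpa using h⟩
def j₁ : ℕ ↪ Option (ℕ ⊕ ℕ) := ⟨fun a => some (Sum.inr a), fun a b h => by simpa using h⟩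

lemma mem_freeSum {F₀ F₁ : Filter ℕ} {U : Set (ℕ ⊕ ℕ)} :
    U ∈ freeSum F₀ F₁ ↔ Sum.inl ⁻¹' U ∈ F₀ ∧ Sum.inr ⁻¹' U ∈ F₁ := by
  rw [freeSum, Filter.mem_sup, Filter.mem_map, Filter.mem_map]

lemma cont_e₀ (F₀ F₁ : Filter ℕ) :
    @Continuous _ _ (NFtop F₀) (NFtop (freeSum F₀ F₁)) e₀ := by
  rw [continuous_def]
  intro U hU
  rw [NFtop_isOpen_iff] at hU ⊢
  intro hnone
  exact (mem_freeSum.mp (hU hnone)).1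

lemma cont_e₁ (F₀ F₁ : Filter ℕ) :
    @Continuous _ _ (NFtop F₁) (NFtop (freeSum F₀ F₁)) e₁ := by
  rw [continuous_def]
  intro U hU
  rw [NFtop_isOpen_iff] at hU ⊢
  intro hnone
  exact (mem_freeSum.mp (hU hnone)).2

lemma cont_r₀ (F₀ F₁ : Filter ℕ) :
    @Continuous _ _ (NFtop (freeSum F₀ F₁)) (NFtop F₀) r₀ := by
  rw [continuous_def]
  intro U hU
  rw [NFtop_isOpen_iff] at hU ⊢
  intro hnone
  rw [mem_freeSum]
  exact ⟨hU hnone, Filter.univ_mem' fun a => hnone⟩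

lemma cont_r₁ (F₀ F₁ : Filter ℕ) :
    @Continuous _ _ (NFtop (freeSum F₀ F₁)) (NFtop F₁) r₁ := by
  rw [continuous_def]
  intro U hU
  rw [NFtop_isOpen_iff] at hU ⊢
  intro hnone
  rw [mem_freeSum]
  exact ⟨Filter.univ_mem' fun a => hnone, hU hnone⟩

/-! ### decomposition -/

def part0 (μ : Option (ℕ ⊕ ℕ) →₀ ℝ) : ℕ →₀ ℝ :=
  Finsupp.comapDomain j₀ μ (j₀.injective.injOn)

def part1 (μ : Option (ℕ ⊕ ℕ) →₀ ℝ) : ℕ →₀ ℝ :=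
  Finsupp.comapDomain j₁ μ (j₁.injective.injOn)

lemma none_notin_range_j₀ : (none : Option (ℕ ⊕ ℕ)) ∉ Set.range j₀ := by
  rintro ⟨a, ha⟩; simp [j₀] at ha

lemma none_notin_range_j₁ : (none : Option (ℕ ⊕ ℕ)) ∉ Set.range j₁ := by
  rintro ⟨a, ha⟩; simp [j₁] at ha

lemma inl_notin_range_j₁ (a : ℕ) : (some (Sum.inl a) : Option (ℕ ⊕ ℕ)) ∉ Set.range j₁ := by
  rintro ⟨b, hb⟩; exact Sum.inr_ne_inl (Option.some.inj hb)

lemma inr_notin_range_j₀ (a : ℕ) : (some (Sum.inr a) : Option (ℕ ⊕ ℕ)) ∉ Set.range j₀ := by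
  rintro ⟨b, hb⟩; exact Sum.inl_ne_inr (Option.some.inj hb)

lemma decomp (μ : Option (ℕ ⊕ ℕ) →₀ ℝ) :
    μ = Finsupp.single none (μ none) + Finsupp.embDomain j₀ (part0 μ)
        + Finsupp.embDomain j₁ (part1 μ) := by
  ext x
  rw [Finsupp.add_apply, Finsupp.add_apply]
  match x with
  | none =>
    rw [Finsupp.single_eq_same, Finsupp.embDomain_notin_range _ _ _ none_notin_range_j₀,
      Finsupp.embDomain_notin_range _ _ _ none_notin_range_j₁]
    ring
  | some (Sum.inl a) =>
    rw [Finsupp.single_eq_of_ne (by simp), Finsupp.embDomain_notin_range _ _ _ (inl_notin_range_j₁ a),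
      show (some (Sum.inl a) : Option (ℕ ⊕ ℕ)) = j₀ a from rfl, Finsupp.embDomain_apply_self]
    rw [part0, Finsupp.comapDomain_apply]
    ring
  | some (Sum.inr a) =>
    rw [Finsupp.single_eq_of_ne (by simp), Finsupp.embDomain_notin_range _ _ _ (inr_notin_range_j₀ a),
      show (some (Sum.inr a) : Option (ℕ ⊕ ℕ)) = j₁ a from rfl, Finsupp.embDomain_apply_self]
    rw [part1, Finsupp.comapDomain_apply]
    ring

lemma disj_single_emb {v : ℕ →₀ ℝ} {c : ℝ} (e : ℕ ↪ Option (ℕ ⊕ ℕ))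
    (he : (none : Option (ℕ ⊕ ℕ)) ∉ Set.range e) :
    Disjoint (Finsupp.single (none : Option (ℕ ⊕ ℕ)) c).support
      (Finsupp.embDomain e v).support := by
  rw [Finset.disjoint_left]
  intro x hx hx'
  have h1 : x = none := Finset.mem_singleton.mp (Finsupp.support_single_subset hx)
  subst h1
  rw [Finsupp.support_embDomain, Finset.mem_map] at hx'
  obtain ⟨a, _, ha⟩ := hx'
  exact he ⟨a, ha⟩

lemma disj_emb_emb (v w : ℕ →₀ ℝ) :
    Disjoint (Finsupp.embDomain j₀ v).support (Finsupp.embDomain j₁ w).support := by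
  rw [Finset.disjoint_left]
  intro x hx hx'
  rw [Finsupp.support_embDomain, Finset.mem_map] at hx hx'
  obtain ⟨a, _, ha⟩ := hx
  obtain ⟨b, _, hb⟩ := hx'
  rw [← ha] at hb
  exact Sum.inr_ne_inl (Option.some.inj hb)

lemma mnorm_decomp (μ : Option (ℕ ⊕ ℕ) →₀ ℝ) :
    mnorm μ = |μ none| + mnorm (part0 μ) + mnorm (part1 μ) := by
  conv_lhs => rw [decomp μ]
  rw [mnorm_add_of_disjoint _ _ ?hd, mnorm_add_of_disjoint _ _
      (disj_single_emb j₀ none_notin_range_j₀), mnorm_single, mnorm_embDomain, mnorm_embDomain]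
  case hd =>
    refine Finset.disjoint_left.mpr fun x hx hx' => ?_
    have := Finsupp.support_add ‹_›
    rcases Finset.mem_union.mp this with h | h
    · exact Finset.disjoint_left.mp (disj_single_emb j₁ none_notin_range_j₁) h hx'
    · exact Finset.disjoint_left.mp (disj_emb_emb _ _) h hx'

lemma mapDomain_r₀_eq (μ : Option (ℕ ⊕ ℕ) →₀ ℝ) :
    Finsupp.mapDomain r₀ μ =
      Finsupp.single none (μ none + (part1 μ).sum fun _ c => c)
        + Finsupp.embDomain Function.Embedding.some (part0 μ) := by
  conv_lhs => rw [decomp μ]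
  rw [Finsupp.mapDomain_add, Finsupp.mapDomain_add, Finsupp.mapDomain_single]
  have h0 : Finsupp.mapDomain r₀ (Finsupp.embDomain j₀ (part0 μ))
      = Finsupp.embDomain Function.Embedding.some (part0 μ) := by
    rw [Finsupp.embDomain_eq_mapDomain, Finsupp.embDomain_eq_mapDomain, ← Finsupp.mapDomain_comp]
    rfl
  have h1 : Finsupp.mapDomain r₀ (Finsupp.embDomain j₁ (part1 μ))
      = Finsupp.single (none : Option ℕ) ((part1 μ).sum fun _ c => c) := by
    rw [Finsupp.embDomain_eq_mapDomain, ← Finsupp.mapDomain_comp]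
    exact mapDomain_const _ _
  rw [h0, h1, Finsupp.single_add, show r₀ none = none from rfl, add_right_comm]

lemma mapDomain_r₁_eq (μ : Option (ℕ ⊕ ℕ) →₀ ℝ) :
    Finsupp.mapDomain r₁ μ =
      Finsupp.single none (μ none + (part0 μ).sum fun _ c => c)
        + Finsupp.embDomain Function.Embedding.some (part1 μ) := by
  conv_lhs => rw [decomp μ]
  rw [Finsupp.mapDomain_add, Finsupp.mapDomain_add, Finsupp.mapDomain_single]
  have h0 : Finsupp.mapDomain r₁ (Finsupp.embDomain j₁ (part1 μ))
      = Finsupp.embDomain Function.Embedding.some (part1 μ) := by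
    rw [Finsupp.embDomain_eq_mapDomain, Finsupp.embDomain_eq_mapDomain, ← Finsupp.mapDomain_comp]
    rfl
  have h1 : Finsupp.mapDomain r₁ (Finsupp.embDomain j₀ (part0 μ))
      = Finsupp.single (none : Option ℕ) ((part0 μ).sum fun _ c => c) := by
    rw [Finsupp.embDomain_eq_mapDomain, ← Finsupp.mapDomain_comp]
    exact mapDomain_const _ _
  rw [h0, h1, Finsupp.single_add, show r₁ none = none from rfl, add_assoc, add_comm
    (Finsupp.single (none : Option ℕ) ((part0 μ).sum fun _ c => c)), ← add_assoc, add_right_comm]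

lemma disj_single_some {v : ℕ →₀ ℝ} {c : ℝ} :
    Disjoint (Finsupp.single (none : Option ℕ) c).support
      (Finsupp.embDomain Function.Embedding.some v).support := by
  rw [Finset.disjoint_left]
  intro x hx hx'
  have h1 : x = none := Finset.mem_singleton.mp (Finsupp.support_single_subset hx)
  subst h1
  rw [Finsupp.support_embDomain, Finset.mem_map] at hx'
  obtain ⟨a, _, ha⟩ := hx'
  exact Option.some_ne_none a ha

lemma mnorm_mapDomain_r₀ (μ : Option (ℕ ⊕ ℕ) →₀ ℝ) :
    mnorm (Finsupp.mapDomain r₀ μ)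
      = |μ none + (part1 μ).sum fun _ c => c| + mnorm (part0 μ) := by
  rw [mapDomain_r₀_eq, mnorm_add_of_disjoint _ _ disj_single_some, mnorm_single, mnorm_embDomain]

lemma mnorm_mapDomain_r₁ (μ : Option (ℕ ⊕ ℕ) →₀ ℝ) :
    mnorm (Finsupp.mapDomain r₁ μ)
      = |μ none + (part0 μ).sum fun _ c => c| + mnorm (part1 μ) := by
  rw [mapDomain_r₁_eq, mnorm_add_of_disjoint _ _ disj_single_some, mnorm_single, mnorm_embDomain]

lemma key_dichotomy (μ : Option (ℕ ⊕ ℕ) →₀ ℝ) (h : mnorm μ = 1) :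
    1/4 ≤ mnorm (Finsupp.mapDomain r₀ μ) ∨ 1/4 ≤ mnorm (Finsupp.mapDomain r₁ μ) := by
  by_contra hc
  push_neg at hc
  obtain ⟨hA, hB⟩ := hc
  rw [mnorm_mapDomain_r₀] at hA
  rw [mnorm_mapDomain_r₁] at hB
  rw [mnorm_decomp] at h
  have h1 : |(part1 μ).sum fun _ c => c| ≤ mnorm (part1 μ) := abs_total_le _
  have h2 : |μ none| ≤ |μ none + (part1 μ).sum fun _ c => c| + |(part1 μ).sum fun _ c => c| := by
    have := abs_add_le (μ none + (part1 μ).sum fun _ c => c) (-(part1 μ).sum fun _ c => c)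
    simpa using this
  have h3 : (0:ℝ) ≤ |μ none + (part0 μ).sum fun _ c => c| := abs_nonneg _
  linarith

/-! ### transfer lemmas -/

lemma transfer_emb {X Y : Type*} (e : X ↪ Y) (P : (Y → ℝ) → Prop) (Q : (X → ℝ) → Prop)
    (hPQ : ∀ f, P f → Q (f ∘ e))
    (μ : ℕ → (X →₀ ℝ)) (hn : ∀ n, mnorm (μ n) = 1)
    (hc : ∀ f, Q f → Tendsto (fun n => mIntg (μ n) f) atTop (nhds 0)) :
    ∃ ν : ℕ → (Y →₀ ℝ), (∀ n, mnorm (ν n) = 1) ∧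
      ∀ f, P f → Tendsto (fun n => mIntg (ν n) f) atTop (nhds 0) := by
  refine ⟨fun n => Finsupp.embDomain e (μ n),
    fun n => by rw [mnorm_embDomain]; exact hn n, fun f hf => ?_⟩
  have h := hc (f ∘ e) (hPQ f hf)
  simpa only [mIntg_embDomain] using h

lemma transfer_map {X Y : Type*} (g : X → Y) (P : (Y → ℝ) → Prop) (Q : (X → ℝ) → Prop)
    (hPQ : ∀ f, P f → Q (f ∘ g))
    (μ : ℕ → (X →₀ ℝ))
    (hc : ∀ f, Q f → Tendsto (fun n => mIntg (μ n) f) atTop (nhds 0))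
    (hbig : ∃ᶠ n in atTop, 1/4 ≤ mnorm (Finsupp.mapDomain g (μ n))) :
    ∃ ν : ℕ → (Y →₀ ℝ), (∀ n, mnorm (ν n) = 1) ∧
      ∀ f, P f → Tendsto (fun n => mIntg (ν n) f) atTop (nhds 0) := by
  obtain ⟨φ, hφ, hP⟩ := Filter.extraction_of_frequently_atTop hbig
  have hpos : ∀ k, 0 < mnorm (Finsupp.mapDomain g (μ (φ k))) :=
    fun k => lt_of_lt_of_le (by norm_num) (hP k)
  refine ⟨fun k => (mnorm (Finsupp.mapDomain g (μ (φ k))))⁻¹ • Finsupp.mapDomain g (μ (φ k)),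
    fun k => ?_, fun f hf => ?_⟩
  · rw [mnorm_smul, abs_inv, abs_of_pos (hpos k), inv_mul_cancel₀ (ne_of_gt (hpos k))]
  · have h1 := hc (f ∘ g) (hPQ f hf)
    have h2 : Tendsto (fun k => mIntg (μ (φ k)) (f ∘ g)) atTop (nhds 0) :=
      h1.comp hφ.tendsto_atTop
    apply squeeze_zero_norm (a := fun k => 4 * |mIntg (μ (φ k)) (f ∘ g)|)
    · intro k
      rw [Real.norm_eq_abs, mIntg_smul, mIntg_mapDomain, abs_mul, abs_inv, abs_of_pos (hpos k)]
      refine mul_le_mul_of_nonneg_right ?_ (abs_nonneg _)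
      have := inv_anti₀ (show (0:ℝ) < 1/4 by norm_num) (hP k)
      simpa using this
    · have := h2.abs.const_mul 4
      simpa using this

lemma freq_dichotomy (μ : ℕ → (Option (ℕ ⊕ ℕ) →₀ ℝ)) (hn : ∀ n, mnorm (μ n) = 1) :
    (∃ᶠ n in atTop, 1/4 ≤ mnorm (Finsupp.mapDomain r₀ (μ n))) ∨
    (∃ᶠ n in atTop, 1/4 ≤ mnorm (Finsupp.mapDomain r₁ (μ n))) := by
  rw [← Filter.frequently_or_distrib]
  exact Filter.Frequently.of_forall fun n => key_dichotomy (μ n) (hn n)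

lemma comp_cont {X Y : Type*} {tX : TopologicalSpace X} {tY : TopologicalSpace Y}
    (g : X → Y) (hg : @Continuous X Y tX tY g) (f : Y → ℝ) (hf : @Continuous Y ℝ tY _ f) :
    @Continuous X ℝ tX _ (f ∘ g) :=
  @Continuous.comp X Y ℝ tX tY _ g f hf hg

theorem stmt11' (F₀ F₁ : Filter ℕ) :
    (JNP (NFtop (freeSum F₀ F₁)) ↔ JNP (NFtop F₀) ∨ JNP (NFtop F₁)) ∧
    (BJNP (NFtop (freeSum F₀ F₁)) ↔ BJNP (NFtop F₀) ∨ BJNP (NFtop F₁)) := by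
  constructor
  · constructor
    · rintro ⟨μ, hn, hc⟩
      rcases freq_dichotomy μ hn with hbig | hbig
      · left
        exact transfer_map r₀ (fun f => @Continuous _ _ (NFtop F₀) _ f)
          (fun f => @Continuous _ _ (NFtop (freeSum F₀ F₁)) _ f)
          (fun f hf => comp_cont r₀ (cont_r₀ F₀ F₁) f hf) μ hc hbig
      · right
        exact transfer_map r₁ (fun f => @Continuous _ _ (NFtop F₁) _ f)
          (fun f => @Continuous _ _ (NFtop (freeSum F₀ F₁)) _ f)
          (fun f hf => comp_cont r₁ (cont_r₁ F₀ F₁) f hf) μ hc hbig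
    · rintro (⟨μ, hn, hc⟩ | ⟨μ, hn, hc⟩)
      · exact transfer_emb e₀ (fun f => @Continuous _ _ (NFtop (freeSum F₀ F₁)) _ f)
          (fun f => @Continuous _ _ (NFtop F₀) _ f)
          (fun f hf => comp_cont e₀ (cont_e₀ F₀ F₁) f hf) μ hn hc
      · exact transfer_emb e₁ (fun f => @Continuous _ _ (NFtop (freeSum F₀ F₁)) _ f)
          (fun f => @Continuous _ _ (NFtop F₁) _ f)
          (fun f hf => comp_cont e₁ (cont_e₁ F₀ F₁) f hf) μ hn hc
  · constructor
    · rintro ⟨μ, hn, hc⟩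
      rcases freq_dichotomy μ hn with hbig | hbig
      · left
        obtain ⟨ν, h1, h2⟩ := transfer_map r₀
          (fun f => @Continuous _ _ (NFtop F₀) _ f ∧ (∃ C : ℝ, ∀ x, |f x| ≤ C))
          (fun f => @Continuous _ _ (NFtop (freeSum F₀ F₁)) _ f ∧ (∃ C : ℝ, ∀ x, |f x| ≤ C))
          (fun f hf => ⟨comp_cont r₀ (cont_r₀ F₀ F₁) f hf.1,
            hf.2.imp fun C hC x => hC (r₀ x)⟩)
          μ (fun f hf => hc f hf.1 hf.2) hbig
        exact ⟨ν, h1, fun f hf hb => h2 f ⟨hf, hb⟩⟩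
      · right
        obtain ⟨ν, h1, h2⟩ := transfer_map r₁
          (fun f => @Continuous _ _ (NFtop F₁) _ f ∧ (∃ C : ℝ, ∀ x, |f x| ≤ C))
          (fun f => @Continuous _ _ (NFtop (freeSum F₀ F₁)) _ f ∧ (∃ C : ℝ, ∀ x, |f x| ≤ C))
          (fun f hf => ⟨comp_cont r₁ (cont_r₁ F₀ F₁) f hf.1,
            hf.2.imp fun C hC x => hC (r₁ x)⟩)
          μ (fun f hf => hc f hf.1 hf.2) hbig
        exact ⟨ν, h1, fun f hf hb => h2 f ⟨hf, hb⟩⟩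
    · rintro (⟨μ, hn, hc⟩ | ⟨μ, hn, hc⟩)
      · obtain ⟨ν, h1, h2⟩ := transfer_emb e₀
          (fun f => @Continuous _ _ (NFtop (freeSum F₀ F₁)) _ f ∧ (∃ C : ℝ, ∀ x, |f x| ≤ C))
          (fun f => @Continuous _ _ (NFtop F₀) _ f ∧ (∃ C : ℝ, ∀ x, |f x| ≤ C))
          (fun f hf => ⟨comp_cont e₀ (cont_e₀ F₀ F₁) f hf.1,
            hf.2.imp fun C hC x => hC (e₀ x)⟩)
          μ hn (fun f hf => hc f hf.1 hf.2)
        exact ⟨ν, h1, fun f hf hb => h2 f ⟨hf, hb⟩⟩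
      · obtain ⟨ν, h1, h2⟩ := transfer_emb e₁
          (fun f => @Continuous _ _ (NFtop (freeSum F₀ F₁)) _ f ∧ (∃ C : ℝ, ∀ x, |f x| ≤ C))
          (fun f => @Continuous _ _ (NFtop F₁) _ f ∧ (∃ C : ℝ, ∀ x, |f x| ≤ C))
          (fun f hf => ⟨comp_cont e₁ (cont_e₁ F₀ F₁) f hf.1,
            hf.2.imp fun C hC x => hC (e₁ x)⟩)
          μ hn (fun f hf => hc f hf.1 hf.2)
        exact ⟨ν, h1, fun f hf hb => h2 f ⟨hf, hb⟩⟩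


/-- `N_{F₀⊕F₁}` has the JNP (resp. BJNP) iff `N_{F₀}` or `N_{F₁}` has it. -/
theorem stmt11 (F₀ F₁ : Filter ℕ) (h₀ : IsFreeFilter F₀) (h₁ : IsFreeFilter F₁) :
    (JNP (NFtop (freeSum F₀ F₁)) ↔ JNP (NFtop F₀) ∨ JNP (NFtop F₁)) ∧
    (BJNP (NFtop (freeSum F₀ F₁)) ↔ BJNP (NFtop F₀) ∨ BJNP (NFtop F₁)) := by
  exact stmt11' F₀ F₁
end
end

section
/- Let F be a free filter on ω. If the space N_F has the bounded Josefson–Nissenzweig property, then F, regarded as a subset of the Cantor space 2^ω via characteristic functions, is meager and has measure zero with respect to the standard product measure (the countable product of fair-coin measures). -/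
open Filter Topology

noncomputable section

/-- A filter on `ω` regarded as a subset of the Cantor space `2^ω = ℕ → Bool`
via characteristic functions. -/
def filterAsSet (F : Filter ℕ) : Set (ℕ → Bool) := {x | {n : ℕ | x n = true} ∈ F}

def natSupp (μ : Option ℕ →₀ ℝ) : Finset ℕ :=
  μ.support.preimage some (Option.some_injective ℕ).injOn

lemma mem_natSupp {μ : Option ℕ →₀ ℝ} {i : ℕ} :
    i ∈ natSupp μ ↔ μ (some i) ≠ 0 := by
  simp [natSupp, Finset.mem_preimage, Finsupp.mem_support_iff]

lemma image_natSupp (μ : Option ℕ →₀ ℝ) :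
    (natSupp μ).image some = μ.support.erase none := by
  ext x
  cases x with
  | none => simp [natSupp]
  | some a => simp [natSupp, Finsupp.mem_support_iff]

lemma sum_option (μ : Option ℕ →₀ ℝ) (f : Option ℕ → ℝ) (h0 : μ none = 0 → f none = 0) :
    ∑ x ∈ μ.support, f x = f none + ∑ i ∈ natSupp μ, f (some i) := by
  have himg : ∑ i ∈ natSupp μ, f (some i) = ∑ x ∈ μ.support.erase none, f x := by
    rw [← image_natSupp, Finset.sum_image (fun _ _ _ _ h => Option.some_injective ℕ h)]
  rw [himg]
  by_cases hn : none ∈ μ.support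
  · exact (Finset.add_sum_erase _ f hn).symm
  · rw [Finset.erase_eq_of_notMem hn, h0 (by simpa [Finsupp.mem_support_iff] using hn)]
    ring

def vOut (μ : Option ℕ →₀ ℝ) (A : Set ℕ) : ℝ :=
  ∑ i ∈ natSupp μ, Set.indicator Aᶜ (fun j => |μ (some j)|) i

lemma vOut_nonneg (μ : Option ℕ →₀ ℝ) (A : Set ℕ) : 0 ≤ vOut μ A :=
  Finset.sum_nonneg fun _ _ => Set.indicator_nonneg (fun _ _ => abs_nonneg _) _

lemma vOut_empty (μ : Option ℕ →₀ ℝ) : vOut μ ∅ = ∑ i ∈ natSupp μ, |μ (some i)| := by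
  simp [vOut]

lemma mnorm_eq (μ : Option ℕ →₀ ℝ) :
    mnorm μ = |μ none| + ∑ i ∈ natSupp μ, |μ (some i)| := by
  unfold mnorm
  exact sum_option μ (fun x => |μ x|) (fun h => by simp [h])

lemma mIntg_eq (μ : Option ℕ →₀ ℝ) (f : Option ℕ → ℝ) :
    mIntg μ f = μ none * f none + ∑ i ∈ natSupp μ, μ (some i) * f (some i) := by
  unfold mIntg
  exact sum_option μ (fun x => μ x * f x) (fun h => by simp [h])

/-- Continuity criterion for `NFtop`. -/
lemma continuous_NFtop {F : Filter ℕ} (f : Option ℕ → ℝ)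
    (h : {a | f (some a) = f none} ∈ F) : @Continuous _ _ (NFtop F) _ f := by
  rw [@continuous_def _ _ (NFtop F) _]
  intro s hs
  show none ∈ f ⁻¹' s → {a : ℕ | some a ∈ f ⁻¹' s} ∈ F
  intro hn
  exact Filter.mem_of_superset h (fun a ha => by
    simp only [Set.mem_setOf_eq, Set.mem_preimage] at ha ⊢
    rw [ha]; exact hn)

section BJN

variable {F : Filter ℕ} (hF : IsFreeFilter F) {μ : ℕ → (Option ℕ →₀ ℝ)}
  (hμ : IsBJNSeq (NFtop F) μ)

include hF hμ in
lemma point_tendsto (i₀ : ℕ) : Tendsto (fun n => μ n (some i₀)) atTop (𝓝 0) := by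
  have hcont : @Continuous _ _ (NFtop F) _ (fun x => if x = some i₀ then (1:ℝ) else 0) := by
    apply continuous_NFtop
    have : {i₀}ᶜ ∈ F := hF.2 (Set.finite_singleton i₀).compl_mem_cofinite
    apply Filter.mem_of_superset this
    intro a ha
    simp only [Set.mem_compl_iff, Set.mem_singleton_iff] at ha
    simp [Option.some_inj, ha]
  have hb : ∃ C : ℝ, ∀ x, |(if x = some i₀ then (1:ℝ) else 0)| ≤ C :=
    ⟨1, fun x => by split_ifs <;> norm_num⟩
  have := hμ.2 _ hcont hb
  convert this using 2 with n
  rw [mIntg_eq]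
  simp only [reduceCtorEq, if_false, mul_zero, zero_add, Option.some.injEq, mul_ite, mul_one]
  rw [Finset.sum_ite_eq' (natSupp (μ n)) i₀]
  split_ifs with h
  · rfl
  · rw [not_not.mp (fun hne => h (mem_natSupp.mpr hne))]

include hF hμ in
lemma finsum_tendsto (T : Finset ℕ) :
    Tendsto (fun n => ∑ i ∈ T, |μ n (some i)|) atTop (𝓝 0) := by
  have : Tendsto (fun n => ∑ i ∈ T, |μ n (some i)|) atTop (𝓝 (∑ i ∈ T, (0:ℝ))) := by
    apply tendsto_finset_sum
    intro i _
    simpa using (point_tendsto hF hμ i).abs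
  simpa using this

include hF hμ in
lemma mass_lb : ∀ᶠ n in atTop, 1/3 ≤ vOut (μ n) ∅ := by
  have hcont : @Continuous _ _ (NFtop F) _ (fun _ : Option ℕ => (1:ℝ)) :=
    continuous_NFtop _ (by simpa using Filter.univ_mem)
  have ht : Tendsto (fun n => mIntg (μ n) (fun _ => 1)) atTop (𝓝 0) :=
    hμ.2 _ hcont ⟨1, fun x => by norm_num⟩
  have habs : ∀ᶠ n in atTop, |mIntg (μ n) (fun _ => 1)| < 1/3 := by
    have := ht.eventually (eventually_abs_sub_lt 0 (by norm_num : (0:ℝ) < 1/3))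
    simpa using this
  filter_upwards [habs] with n hn
  have h1 : mnorm (μ n) = 1 := hμ.1 n
  rw [mnorm_eq] at h1
  have h2 : mIntg (μ n) (fun _ => 1) = μ n none + ∑ i ∈ natSupp (μ n), μ n (some i) := by
    rw [mIntg_eq]; simp
  have h3 : |∑ i ∈ natSupp (μ n), μ n (some i)| ≤ ∑ i ∈ natSupp (μ n), |μ n (some i)| :=
    Finset.abs_sum_le_sum_abs _ _
  have h4 : |μ n none| ≤ |mIntg (μ n) (fun _ => 1)| + ∑ i ∈ natSupp (μ n), |μ n (some i)| := by
    have : μ n none = mIntg (μ n) (fun _ => 1) - ∑ i ∈ natSupp (μ n), μ n (some i) := by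
      rw [h2]; ring
    rw [this]
    calc |mIntg (μ n) (fun _ => 1) - ∑ i ∈ natSupp (μ n), μ n (some i)|
        ≤ |mIntg (μ n) (fun _ => 1)| + |∑ i ∈ natSupp (μ n), μ n (some i)| := abs_sub _ _
      _ ≤ _ := by linarith
  rw [vOut_empty]
  linarith

end BJN

lemma sum_indicator_le (s t : Finset ℕ) (f : ℕ → ℝ) (hf : ∀ i, 0 ≤ f i) :
    ∑ i ∈ s, Set.indicator (↑t) f i ≤ ∑ i ∈ t, f i := by
  classical
  have h1 : ∀ i ∈ s, Set.indicator (↑t) f i = if i ∈ t then f i else 0 := by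
    intro i _
    by_cases h : i ∈ t <;> simp [Set.indicator, h]
  rw [Finset.sum_congr rfl h1, ← Finset.sum_filter]
  exact Finset.sum_le_sum_of_subset_of_nonneg (fun i hi => (Finset.mem_filter.mp hi).2) (fun i _ _ => hf i)

section BJN2

variable {F : Filter ℕ} (hF : IsFreeFilter F) {μ : ℕ → (Option ℕ →₀ ℝ)}
  (hμ : IsBJNSeq (NFtop F) μ)

include hF hμ in
lemma vOut_tendsto {A : Set ℕ} (hA : A ∈ F) :
    Tendsto (fun n => vOut (μ n) A) atTop (𝓝 0) := by
  classical
  by_contra hcon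
  rw [Metric.tendsto_atTop] at hcon
  push_neg at hcon
  obtain ⟨δ, hδ, hfreq⟩ := hcon
  have hfreq' : ∀ N, ∃ n, N ≤ n ∧ δ ≤ vOut (μ n) A := by
    intro N
    obtain ⟨n, hn, hd⟩ := hfreq N
    refine ⟨n, hn, ?_⟩
    rwa [Real.dist_eq, sub_zero, abs_of_nonneg (vOut_nonneg _ _)] at hd
  have hex : ∀ (N : ℕ) (T : Finset ℕ), ∃ n, N < n ∧ δ ≤ vOut (μ n) A ∧
      ∑ i ∈ T, |μ n (some i)| < δ/4 := by
    intro N T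
    have hev : ∀ᶠ n in atTop, N < n ∧ ∑ i ∈ T, |μ n (some i)| < δ/4 :=
      (eventually_gt_atTop N).and ((finsum_tendsto hF hμ T).eventually_lt_const (by linarith))
    have hfr : ∃ᶠ n in atTop, δ ≤ vOut (μ n) A :=
      frequently_atTop.mpr (fun N => (hfreq' N).imp fun n h => ⟨h.1, h.2⟩)
    obtain ⟨n, h1, h2, h3⟩ := (hfr.and_eventually hev).exists
    exact ⟨n, h2, h1, h3⟩
  set pick : ℕ → Finset ℕ → ℕ := fun N T => (hex N T).choose with hpick
  set step : ℕ × Finset ℕ → ℕ × Finset ℕ :=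
    fun p => (pick p.1 p.2, p.2 ∪ natSupp (μ (pick p.1 p.2))) with hstep
  set st : ℕ → ℕ × Finset ℕ := fun j => step^[j] (0, ∅) with hstdef
  set ns : ℕ → ℕ := fun j => (st (j+1)).1 with hnsdef
  set pT : ℕ → Finset ℕ := fun j => (st j).2 with hpTdef
  have hst : ∀ j, st (j+1) = step (st j) := fun j => Function.iterate_succ_apply' step j _
  have hns : ∀ j, ns j = pick (st j).1 (pT j) := fun j => by
    show (st (j+1)).1 = _; rw [hst j]
  have hpT : ∀ j, pT (j+1) = pT j ∪ natSupp (μ (ns j)) := fun j => by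
    show (st (j+1)).2 = _; rw [hst j, hns j]
  have hspec : ∀ j, (st j).1 < ns j ∧ δ ≤ vOut (μ (ns j)) A ∧
      ∑ i ∈ pT j, |μ (ns j) (some i)| < δ/4 := fun j => by
    rw [hns j]; exact (hex (st j).1 (pT j)).choose_spec
  have hmono : Monotone pT := monotone_nat_of_le_succ (fun j => by
    rw [hpT j]; exact Finset.subset_union_left)
  have hsub : ∀ j, natSupp (μ (ns j)) ⊆ pT (j+1) := fun j => by
    rw [hpT j]; exact Finset.subset_union_right
  have hnsmono : StrictMono ns := strictMono_nat_of_lt_succ (fun j => (hspec (j+1)).1)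
  -- the gliding-hump function
  set q : ℕ → Prop := fun i => ∃ j, i ∈ natSupp (μ (ns j)) with hq
  set g : Option ℕ → ℝ := fun x => x.elim 0 (fun i => Set.indicator Aᶜ
    (fun i' => if h : q i' then Real.sign (μ (ns (Nat.find h)) (some i')) else 0) i) with hg
  have hgnone : g none = 0 := by rw [hg]; rfl
  have hgsome : ∀ i, g (some i) = Set.indicator Aᶜ
      (fun i' => if h : q i' then Real.sign (μ (ns (Nat.find h)) (some i')) else 0) i := by
    intro i; rw [hg]; rfl
  have hsgnabs : ∀ y : ℝ, |Real.sign y| ≤ 1 := by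
    intro y
    unfold Real.sign
    split_ifs <;> norm_num
  have hsgnmul : ∀ y : ℝ, y ≠ 0 → y * Real.sign y = |y| := by
    intro y hy
    rcases lt_trichotomy y 0 with h | h | h
    · rw [Real.sign_of_neg h, abs_of_neg h]; ring
    · exact absurd h hy
    · rw [Real.sign_of_pos h, abs_of_pos h]; ring
  have hg1 : ∀ x, |g x| ≤ 1 := by
    intro x
    cases x with
    | none => simp [hg]
    | some i =>
      rw [hgsome i]
      by_cases hiA : i ∈ Aᶜ
      · rw [Set.indicator_of_mem hiA]
        split_ifs with h
        · exact hsgnabs _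
        · norm_num
      · rw [Set.indicator_of_notMem hiA]; norm_num
  have hcont : @Continuous _ _ (NFtop F) _ g := by
    apply continuous_NFtop
    apply Filter.mem_of_superset hA
    intro a ha
    show g (some a) = g none
    rw [hgsome a, Set.indicator_of_notMem (by simp [ha]), hgnone]
  have hkey : ∀ j, δ/2 ≤ mIntg (μ (ns j)) g := by
    intro j
    set m := μ (ns j) with hm
    have e1 : mIntg m g = ∑ i ∈ natSupp m, m (some i) * g (some i) := by
      rw [mIntg_eq]
      rw [hgnone, mul_zero, zero_add]
    have e2 : ∀ i ∈ natSupp m,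
        Set.indicator Aᶜ (fun i' => |m (some i')|) i
          - 2 * Set.indicator (↑(pT j)) (fun i' => |m (some i')|) i
        ≤ m (some i) * g (some i) := by
      intro i hi
      have hTnn : 0 ≤ Set.indicator (↑(pT j)) (fun i' => |m (some i')|) i :=
        Set.indicator_nonneg (fun _ _ => abs_nonneg _) _
      by_cases hiA : i ∈ A
      · have hg0 : g (some i) = 0 := by
          rw [hgsome i]
          exact Set.indicator_of_notMem (by simp [hiA]) _
        rw [hg0, mul_zero, Set.indicator_of_notMem (by simp [hiA] : i ∉ Aᶜ)]
        linarith
      · have hqi : q i := ⟨j, hi⟩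
        have hgi : g (some i) = Real.sign (μ (ns (Nat.find hqi)) (some i)) := by
          rw [hgsome i, Set.indicator_of_mem (by simp [hiA] : i ∈ Aᶜ), dif_pos hqi]
        have hAi : Set.indicator Aᶜ (fun i' => |m (some i')|) i = |m (some i)| :=
          Set.indicator_of_mem (by simp [hiA]) _
        have hfle : Nat.find hqi ≤ j := Nat.find_le hi
        rcases eq_or_lt_of_le hfle with heq | hlt
        · have hne : m (some i) ≠ 0 := mem_natSupp.mp hi
          rw [hgi, heq, ← hm, hsgnmul _ hne, hAi]
          linarith
        · have hiT : i ∈ pT j := hmono hlt (hsub (Nat.find hqi) (Nat.find_spec hqi))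
          have hTi : Set.indicator (↑(pT j)) (fun i' => |m (some i')|) i = |m (some i)| :=
            Set.indicator_of_mem (by simpa using hiT) _
          rw [hAi, hTi, hgi]
          have hb : |m (some i) * Real.sign (μ (ns (Nat.find hqi)) (some i))| ≤ |m (some i)| := by
            rw [abs_mul]
            calc |m (some i)| * |Real.sign (μ (ns (Nat.find hqi)) (some i))|
                ≤ |m (some i)| * 1 := by
                  exact mul_le_mul_of_nonneg_left (hsgnabs _) (abs_nonneg _)
              _ = |m (some i)| := mul_one _
          have := neg_abs_le (m (some i) * Real.sign (μ (ns (Nat.find hqi)) (some i)))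
          linarith
    have e3 : vOut m A - 2 * ∑ i ∈ natSupp m, Set.indicator (↑(pT j)) (fun i' => |m (some i')|) i
        ≤ ∑ i ∈ natSupp m, m (some i) * g (some i) := by
      rw [vOut, Finset.mul_sum, ← Finset.sum_sub_distrib]
      exact Finset.sum_le_sum e2
    have e4 : ∑ i ∈ natSupp m, Set.indicator (↑(pT j)) (fun i' => |m (some i')|) i
        ≤ ∑ i ∈ pT j, |m (some i)| := sum_indicator_le _ _ _ (fun _ => abs_nonneg _)
    have h5 := (hspec j).2.1
    have h6 := (hspec j).2.2
    rw [e1] at *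
    rw [← hm] at h5 h6
    linarith
  have hlim : Tendsto (fun j => mIntg (μ (ns j)) g) atTop (𝓝 0) :=
    (hμ.2 g hcont ⟨1, hg1⟩).comp hnsmono.tendsto_atTop
  have := (hlim.eventually_lt_const (by linarith : (0:ℝ) < δ/2)).exists
  obtain ⟨j, hj⟩ := this
  exact absurd (hkey j) (by simpa using not_le.mpr hj)

end BJN2
section BJN3

variable {F : Filter ℕ} (hF : IsFreeFilter F) {μ : ℕ → (Option ℕ →₀ ℝ)}
  (hμ : IsBJNSeq (NFtop F) μ)

include hF hμ in
lemma blocks_exist : ∃ (B : ℕ → Finset ℕ) (w : ℕ → ℕ → ℝ),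
    (∀ j i, 0 ≤ w j i) ∧ (∀ j k, j ≠ k → ∀ i, i ∈ B j → i ∈ B k → False) ∧
    (∀ j, 1/4 ≤ ∑ i ∈ B j, w j i) ∧
    (∀ A ∈ F, Tendsto (fun j => ∑ i ∈ B j, Set.indicator Aᶜ (w j) i) atTop (𝓝 0)) := by
  classical
  have hex : ∀ (N : ℕ) (T : Finset ℕ), ∃ n, N < n ∧ 1/3 ≤ vOut (μ n) ∅ ∧
      ∑ i ∈ T, |μ n (some i)| < 1/12 := by
    intro N T
    have h1 := mass_lb hF hμ
    have h2 := (finsum_tendsto hF hμ T).eventually_lt_const (by norm_num : (0:ℝ) < 1/12)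
    obtain ⟨n, hn⟩ := ((eventually_gt_atTop N).and (h1.and h2)).exists
    exact ⟨n, hn.1, hn.2.1, hn.2.2⟩
  set pick : ℕ → Finset ℕ → ℕ := fun N T => (hex N T).choose with hpick
  set step : ℕ × Finset ℕ → ℕ × Finset ℕ :=
    fun p => (pick p.1 p.2, p.2 ∪ natSupp (μ (pick p.1 p.2))) with hstep
  set st : ℕ → ℕ × Finset ℕ := fun j => step^[j] (0, ∅) with hstdef
  set ns : ℕ → ℕ := fun j => (st (j+1)).1 with hnsdef
  set pT : ℕ → Finset ℕ := fun j => (st j).2 with hpTdef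
  have hst : ∀ j, st (j+1) = step (st j) := fun j => Function.iterate_succ_apply' step j _
  have hns : ∀ j, ns j = pick (st j).1 (pT j) := fun j => by
    show (st (j+1)).1 = _; rw [hst j]
  have hpT : ∀ j, pT (j+1) = pT j ∪ natSupp (μ (ns j)) := fun j => by
    show (st (j+1)).2 = _; rw [hst j, hns j]
  have hspec : ∀ j, (st j).1 < ns j ∧ 1/3 ≤ vOut (μ (ns j)) ∅ ∧
      ∑ i ∈ pT j, |μ (ns j) (some i)| < 1/12 := fun j => by
    rw [hns j]; exact (hex (st j).1 (pT j)).choose_spec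
  have hnsmono : StrictMono ns := strictMono_nat_of_lt_succ (fun j => (hspec (j+1)).1)
  have hmonoT : Monotone pT := monotone_nat_of_le_succ (fun j => by
    rw [hpT j]; exact Finset.subset_union_left)
  refine ⟨fun j => natSupp (μ (ns j)) \ pT j, fun j i => |μ (ns j) (some i)|,
    fun j i => abs_nonneg _, ?_, ?_, ?_⟩
  · -- disjointness
    have key : ∀ j k, j < k → ∀ i, i ∈ natSupp (μ (ns j)) \ pT j →
        i ∈ natSupp (μ (ns k)) \ pT k → False := by
      intro j k hjk i hij hik
      have h1 : i ∈ pT (j+1) := by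
        rw [hpT j]
        exact Finset.mem_union_right _ (Finset.mem_sdiff.mp hij).1
      exact (Finset.mem_sdiff.mp hik).2 (hmonoT hjk h1)
    intro j k hne i hij hik
    rcases lt_or_gt_of_ne hne with hlt | hlt
    · exact key j k hlt i hij hik
    · exact key k j hlt i hik hij
  · -- mass lower bound
    intro j
    show (1:ℝ)/4 ≤ ∑ i ∈ natSupp (μ (ns j)) \ pT j, |μ (ns j) (some i)|
    have htot := Finset.sum_filter_add_sum_filter_not (natSupp (μ (ns j)))
      (fun i => i ∈ pT j) (fun i => |μ (ns j) (some i)|)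
    have hsd : natSupp (μ (ns j)) \ pT j
        = (natSupp (μ (ns j))).filter (fun i => i ∉ pT j) := Finset.sdiff_eq_filter _ _
    have hvtot : ∑ i ∈ natSupp (μ (ns j)), |μ (ns j) (some i)| = vOut (μ (ns j)) ∅ :=
      (vOut_empty _).symm
    have hsmall : ∑ i ∈ (natSupp (μ (ns j))).filter (fun i => i ∈ pT j), |μ (ns j) (some i)|
        ≤ ∑ i ∈ pT j, |μ (ns j) (some i)| :=
      Finset.sum_le_sum_of_subset_of_nonneg
        (fun i hi => (Finset.mem_filter.mp hi).2) (fun i _ _ => abs_nonneg _)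
    have h2 := (hspec j).2.1
    have h3 := (hspec j).2.2
    rw [hsd]
    rw [hvtot] at htot
    linarith
  · -- indicator sums tend to zero
    intro A hA
    have hbound : ∀ j, ∑ i ∈ natSupp (μ (ns j)) \ pT j, Set.indicator Aᶜ
        (fun i => |μ (ns j) (some i)|) i ≤ vOut (μ (ns j)) A := by
      intro j
      exact Finset.sum_le_sum_of_subset_of_nonneg
        (Finset.sdiff_subset)
        (fun i _ _ => Set.indicator_nonneg (fun _ _ => abs_nonneg _) _)
    have hnn : ∀ j, 0 ≤ ∑ i ∈ natSupp (μ (ns j)) \ pT j, Set.indicator Aᶜ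
        (fun i => |μ (ns j) (some i)|) i :=
      fun j => Finset.sum_nonneg fun i _ => Set.indicator_nonneg (fun _ _ => abs_nonneg _) _
    have htend : Tendsto (fun j => vOut (μ (ns j)) A) atTop (𝓝 0) :=
      (vOut_tendsto hF hμ hA).comp hnsmono.tendsto_atTop
    show Tendsto (fun j => ∑ i ∈ natSupp (μ (ns j)) \ pT j,
      Set.indicator Aᶜ (fun i => |μ (ns j) (some i)|) i) atTop (𝓝 0)
    exact squeeze_zero hnn hbound htend

end BJN3

open MeasureTheory

def flipSet (t : Finset ℕ) (x : ℕ → Bool) : ℕ → Bool := fun i => if i ∈ t then !(x i) else x i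

def Cyl : Set (Set (ℕ → Bool)) :=
  {S | ∃ (s : Finset ℕ) (b : ℕ → Bool), S = {x | ∀ i ∈ s, x i = b i}}

lemma cyl_measurableSet (s : Finset ℕ) (b : ℕ → Bool) :
    MeasurableSet {x : ℕ → Bool | ∀ i ∈ s, x i = b i} := by
  have h : {x : ℕ → Bool | ∀ i ∈ s, x i = b i} = ⋂ i ∈ s, {x : ℕ → Bool | x i = b i} := by
    ext x; simp
  rw [h]
  refine MeasurableSet.biInter (s : Set ℕ).to_countable (fun i _ => ?_)
  have h2 : {x : ℕ → Bool | x i = b i} = (fun x : ℕ → Bool => x i) ⁻¹' {b i} := rfl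
  rw [h2]
  exact measurable_pi_apply i (measurableSet_singleton (b i))

lemma pi_eq_generateFrom_cyl :
    (inferInstance : MeasurableSpace (ℕ → Bool)) = MeasurableSpace.generateFrom Cyl := by
  apply le_antisymm
  · show (⨆ i : ℕ, MeasurableSpace.comap (fun x : ℕ → Bool => x i) inferInstance) ≤ _
    refine iSup_le fun i => ?_
    rintro S ⟨t, -, rfl⟩
    have h : (fun x : ℕ → Bool => x i) ⁻¹' t = ⋃ b ∈ t, (fun x : ℕ → Bool => x i) ⁻¹' {b} :=
      (Set.biUnion_preimage_singleton _ _).symm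
    rw [h]
    refine MeasurableSet.biUnion t.to_countable (fun b _ => ?_)
    apply MeasurableSpace.measurableSet_generateFrom
    refine ⟨{i}, (fun _ => b), ?_⟩
    ext x; simp [Set.mem_preimage]
  · refine MeasurableSpace.generateFrom_le ?_
    rintro S ⟨s, b, rfl⟩
    exact cyl_measurableSet s b

lemma isPiSystem_cyl : IsPiSystem Cyl := by
  rintro S ⟨s, b, rfl⟩ T ⟨t, c, rfl⟩ hne
  obtain ⟨x, hxs, hxt⟩ := hne
  refine ⟨s ∪ t, x, ?_⟩
  ext y
  simp only [Set.mem_inter_iff, Set.mem_setOf_eq, Finset.mem_union]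
  constructor
  · rintro ⟨h1, h2⟩ i hi
    rcases hi with hi | hi
    · rw [h1 i hi, hxs i hi]
    · rw [h2 i hi, hxt i hi]
  · intro h
    exact ⟨fun i hi => by rw [h i (Or.inl hi), ← hxs i hi],
           fun i hi => by rw [h i (Or.inr hi), ← hxt i hi]⟩

section Pmeas

variable {P : Measure (ℕ → Bool)}
  (hP : ∀ (s : Finset ℕ) (b : ℕ → Bool),
    P {x | ∀ i ∈ s, x i = b i} = (1 / 2 : ENNReal) ^ s.card)

include hP in
lemma P_univ : P Set.univ = 1 := by
  have := hP ∅ (fun _ => true)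
  simpa using this

lemma measurable_flipSet (t : Finset ℕ) : Measurable (flipSet t) := by
  apply measurable_pi_lambda
  intro i
  by_cases h : i ∈ t
  · simp only [flipSet, h, if_true]
    exact (measurable_of_countable (fun b : Bool => !b)).comp (measurable_pi_apply i)
  · simp only [flipSet, h, if_false]
    exact measurable_pi_apply i

include hP in
lemma map_flip (t : Finset ℕ) : P = P.map (flipSet t) := by
  haveI : IsFiniteMeasure P := ⟨by rw [P_univ hP]; exact ENNReal.one_lt_top⟩
  apply MeasureTheory.ext_of_generate_finite Cyl pi_eq_generateFrom_cyl isPiSystem_cyl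
  · rintro S ⟨s, b, rfl⟩
    rw [Measure.map_apply (measurable_flipSet t) (cyl_measurableSet s b)]
    have h : flipSet t ⁻¹' {x | ∀ i ∈ s, x i = b i}
        = {x | ∀ i ∈ s, x i = (fun i' => if i' ∈ t then !(b i') else b i') i} := by
      ext x
      simp only [Set.mem_preimage, Set.mem_setOf_eq, flipSet]
      refine forall₂_congr fun i _ => ?_
      by_cases h : i ∈ t
      · simp only [if_pos h]
        constructor
        · intro hh; rw [← hh]; simp
        · intro hh; rw [hh]; simp
      · simp [h]
    rw [h, hP, hP]
  · rw [Measure.map_apply (measurable_flipSet t) MeasurableSet.univ]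
    simp

include hP in
lemma P_flip (t : Finset ℕ) {Ev : Set (ℕ → Bool)} (hEv : MeasurableSet Ev) :
    P (flipSet t ⁻¹' Ev) = P Ev := by
  conv_rhs => rw [map_flip hP t]
  rw [Measure.map_apply (measurable_flipSet t) hEv]

end Pmeas

lemma cantor_small (B : ℕ → Finset ℕ) (w : ℕ → ℕ → ℝ) (hw : ∀ j i, 0 ≤ w j i)
    (hdisj : ∀ j k, j ≠ k → ∀ i, i ∈ B j → i ∈ B k → False)
    (hmassb : ∀ j, 1/4 ≤ ∑ i ∈ B j, w j i)
    (G : Set (ℕ → Bool))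
    (hG : ∀ x ∈ G, ∀ᶠ j in atTop,
      ∑ i ∈ B j, Set.indicator {i' | x i' = false} (w j) i < 1/8) :
    IsMeagre G ∧ ∀ P : Measure (ℕ → Bool),
      (∀ (s : Finset ℕ) (b : ℕ → Bool),
        P {x | ∀ i ∈ s, x i = b i} = (1 / 2 : ENNReal) ^ s.card) →
      P G = 0 := by
  classical
  set val : ℕ → (ℕ → Bool) → ℝ := fun j x => ∑ i ∈ B j, if x i = true then w j i else 0 with hval
  set mB : ℕ → ℝ := fun j => ∑ i ∈ B j, w j i with hmB
  set E : ℕ → Set (ℕ → Bool) := fun j => {x | mB j / 2 < val j x} with hE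
  have hvalflip : ∀ (t : Finset ℕ) j x, (∀ i ∈ B j, i ∉ t) →
      val j (flipSet t x) = val j x := by
    intro t j x hdis
    apply Finset.sum_congr rfl
    intro i hi
    have : flipSet t x i = x i := by simp [flipSet, hdis i hi]
    rw [this]
  have hvalflip2 : ∀ j x, val j (flipSet (B j) x) = mB j - val j x := by
    intro j x
    rw [hmB, hval, ← Finset.sum_sub_distrib]
    apply Finset.sum_congr rfl
    intro i hi
    have h1 : flipSet (B j) x i = !(x i) := by simp [flipSet, hi]
    rw [h1]
    cases hxi : x i <;> simp
  -- inclusion of G into the tail intersections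
  have hincl : G ⊆ ⋃ m, ⋂ j, ⋂ (_ : m ≤ j), E j := by
    intro x hx
    obtain ⟨m, hm⟩ := eventually_atTop.mp (hG x hx)
    refine Set.mem_iUnion.mpr ⟨m, Set.mem_iInter.mpr fun j => Set.mem_iInter.mpr fun hj => ?_⟩
    have h1 : val j x + ∑ i ∈ B j, (if x i = true then 0 else w j i) = mB j := by
      rw [hval, hmB, ← Finset.sum_add_distrib]
      exact Finset.sum_congr rfl fun i _ => by by_cases h : x i = true <;> simp [h]
    have h2 : ∑ i ∈ B j, (if x i = true then 0 else w j i)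
        ≤ ∑ i ∈ B j, Set.indicator {i' | x i' = false} (w j) i := by
      refine Finset.sum_le_sum fun i _ => ?_
      by_cases h : x i = true
      · rw [if_pos h]
        exact Set.indicator_nonneg (fun _ _ => hw j _) _
      · have hxf : x i = false := by simpa using h
        rw [if_neg h, Set.indicator_of_mem (by simp [hxf])]
    have h3 := hm j hj
    have h4 := hmassb j
    show mB j / 2 < val j x
    have h5 : (1:ℝ)/4 ≤ mB j := hmassb j
    linarith
  -- meagre part
  set Ebar : ℕ → Set (ℕ → Bool) := fun j => {x | mB j / 2 ≤ val j x} with hEbar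
  have hvalcont : ∀ j, Continuous (val j) := by
    intro j
    apply continuous_finset_sum
    intro i _
    exact (continuous_of_discreteTopology
      (f := fun b : Bool => if b = true then w j i else 0)).comp (continuous_apply i)
  have hclosed : ∀ m, IsClosed (⋂ j, ⋂ (_ : m ≤ j), Ebar j) :=
    fun m => isClosed_iInter fun j => isClosed_iInter fun _ =>
      isClosed_le continuous_const (hvalcont j)
  have havoid : ∀ (m : ℕ) (T : Finset ℕ), ∃ j, m ≤ j ∧ ∀ i ∈ B j, i ∉ T := by
    intro m T
    by_contra hcon
    push_neg at hcon
    have hcon' : ∀ j, m ≤ j → ∃ i, i ∈ B j ∧ i ∈ T := by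
      intro j hj
      obtain ⟨i, hi1, hi2⟩ := hcon j hj
      exact ⟨i, hi1, hi2⟩
    set f : ℕ → ℕ := fun j => if h : m ≤ j then (hcon' j h).choose else 0 with hf
    have hf1 : ∀ j, m ≤ j → f j ∈ B j := fun j hj => by
      rw [hf]; simp only [dif_pos hj]; exact (hcon' j hj).choose_spec.1
    have hf2 : ∀ j, m ≤ j → f j ∈ T := fun j hj => by
      rw [hf]; simp only [dif_pos hj]; exact (hcon' j hj).choose_spec.2
    have hcard := Finset.card_le_card_of_injOn f
      (fun j hj => hf2 j (Finset.mem_Ico.mp hj).1)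
      (fun j hj j' hj' heq => by
        by_contra hne
        exact hdisj j j' hne (f j) (hf1 j (Finset.mem_Ico.mp hj).1)
          (heq ▸ hf1 j' (Finset.mem_Ico.mp hj').1))
      (s := Finset.Ico m (m + T.card + 1))
    rw [Nat.card_Ico] at hcard
    omega
  have hnwd : ∀ m, IsNowhereDense (⋂ j, ⋂ (_ : m ≤ j), Ebar j) := by
    intro m
    show interior (closure _) = ∅
    rw [(hclosed m).closure_eq, Set.eq_empty_iff_forall_notMem]
    intro x hx
    have hnb : (⋂ j, ⋂ (_ : m ≤ j), Ebar j) ∈ 𝓝 x := mem_interior_iff_mem_nhds.mp hx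
    rw [nhds_pi, Filter.mem_pi] at hnb
    obtain ⟨I, hIfin, t, ht, hsub⟩ := hnb
    obtain ⟨j, hjm, hjdis⟩ := havoid m hIfin.toFinset
    set y : ℕ → Bool := fun i => if i ∈ B j then false else x i with hy
    have hyI : y ∈ I.pi t := by
      intro i hi
      have hiB : i ∉ B j := fun hiB => hjdis i hiB (hIfin.mem_toFinset.mpr hi)
      rw [hy]
      simp only [if_neg hiB]
      exact mem_of_mem_nhds (ht i)
    have hyE : y ∈ Ebar j := by
      have := hsub hyI
      exact Set.mem_iInter.mp (Set.mem_iInter.mp this j) hjm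
    have hval0 : val j y = 0 := by
      rw [hval]
      apply Finset.sum_eq_zero
      intro i hi
      rw [hy]
      simp [hi]
    have h4 : (1:ℝ)/4 ≤ mB j := hmassb j
    have : mB j / 2 ≤ 0 := by rw [← hval0]; exact hyE
    linarith
  constructor
  · rw [isMeagre_iff_countable_union_isNowhereDense]
    refine ⟨Set.range (fun m => ⋂ j, ⋂ (_ : m ≤ j), Ebar j), ?_, Set.countable_range _, ?_⟩
    · rintro T ⟨m, rfl⟩; exact hnwd m
    · rw [Set.sUnion_range]
      refine hincl.trans (Set.iUnion_mono fun m => Set.iInter_mono fun j =>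
        Set.iInter_mono fun hj => ?_)
      rw [hE, hEbar]
      intro x hx
      simp only [Set.mem_setOf_eq] at hx ⊢
      exact le_of_lt hx
  -- measure part
  · intro P hP
    have hmeasval : ∀ j, Measurable (val j) := by
      intro j
      apply Finset.measurable_sum
      intro i _
      exact (measurable_of_countable
        (fun b : Bool => if b = true then w j i else 0)).comp (measurable_pi_apply i)
    have hmeasE : ∀ j, MeasurableSet (E j) :=
      fun j => measurableSet_lt measurable_const (hmeasval j)
    have hstep : ∀ m K, P (⋂ j ∈ Finset.Ico m (m + K), E j) ≤ (1/2 : ENNReal) ^ K := by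
      intro m K
      induction K with
      | zero =>
        simp only [Nat.add_zero, Finset.Ico_self]
        have : ⋂ j ∈ (∅ : Finset ℕ), E j = Set.univ := by simp
        rw [this, P_univ hP, pow_zero]
      | succ K ih =>
        have hIco : Finset.Ico m (m + (K+1)) = insert (m + K) (Finset.Ico m (m + K)) := by
          have hh : m + (K+1) = (m + K) + 1 := by omega
          rw [hh]
          exact Nat.Ico_succ_right_eq_insert_Ico (Nat.le_add_right m K)
        set D := ⋂ j ∈ Finset.Ico m (m + K), E j with hD
        have hDmeas : MeasurableSet D :=
          MeasurableSet.biInter (Finset.Ico m (m+K) : Set ℕ).to_countable (fun j _ => hmeasE j)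
        have hrw : ⋂ j ∈ Finset.Ico m (m + (K+1)), E j = D ∩ E (m + K) := by
          rw [hIco, Finset.set_biInter_insert, hD, Set.inter_comm]
        set E' : Set (ℕ → Bool) := {x | val (m + K) x < mB (m + K) / 2} with hE'
        have hE'meas : MeasurableSet E' := measurableSet_lt (hmeasval _) measurable_const
        have hflipD : ∀ x, flipSet (B (m+K)) x ∈ D ↔ x ∈ D := by
          intro x
          rw [hD]
          simp only [Set.mem_iInter]
          refine forall_congr' fun j => forall_congr' fun hj => ?_
          have hj' := Finset.mem_Ico.mp hj
          have hne : j ≠ m + K := by omega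
          have hvv : val j (flipSet (B (m+K)) x) = val j x :=
            hvalflip _ _ _ (fun i hi hi' => hdisj j (m+K) hne i hi hi')
          rw [hE]
          simp only [Set.mem_setOf_eq, hvv]
        have hpre : flipSet (B (m+K)) ⁻¹' (D ∩ E (m+K)) = D ∩ E' := by
          ext x
          simp only [Set.mem_preimage, Set.mem_inter_iff, hflipD]
          refine and_congr_right fun _ => ?_
          rw [hE, hE']
          simp only [Set.mem_setOf_eq, hvalflip2]
          constructor <;> intro <;> linarith
        have hinv : P (D ∩ E (m+K)) = P (D ∩ E') := by
          rw [← hpre, P_flip hP _ (hDmeas.inter (hmeasE _))]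
        have hdisjE : Disjoint (D ∩ E (m+K)) (D ∩ E') := by
          rw [Set.disjoint_left]
          rintro x ⟨-, hx1⟩ ⟨-, hx2⟩
          rw [hE] at hx1; rw [hE'] at hx2
          simp only [Set.mem_setOf_eq] at hx1 hx2
          linarith
        have hsum : P (D ∩ E (m+K)) + P (D ∩ E') ≤ P D := by
          rw [← measure_union hdisjE (hDmeas.inter hE'meas)]
          exact measure_mono (Set.union_subset Set.inter_subset_left Set.inter_subset_left)
        rw [hrw]
        have h2a : P (D ∩ E (m+K)) + P (D ∩ E (m+K)) ≤ P D := by rw [hinv] at hsum ⊢; exact hsum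
        have h2b : P (D ∩ E (m+K)) * 2 ≤ P D := by
          rw [mul_two]; exact h2a
        have h2c : P (D ∩ E (m+K)) ≤ P D / 2 :=
          (ENNReal.le_div_iff_mul_le (Or.inl two_ne_zero) (Or.inl ENNReal.ofNat_ne_top)).mpr h2b
        calc P (D ∩ E (m+K)) ≤ P D / 2 := h2c
          _ ≤ (1/2 : ENNReal) ^ K / 2 := ENNReal.div_le_div_right ih 2
          _ = (1/2 : ENNReal) ^ (K + 1) := by
              rw [pow_succ, div_eq_mul_inv, one_div]
    have hCm : ∀ m, P (⋂ j, ⋂ (_ : m ≤ j), E j) = 0 := by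
      intro m
      refine le_antisymm ?_ zero_le
      have hle : ∀ K, P (⋂ j, ⋂ (_ : m ≤ j), E j) ≤ (1/2 : ENNReal) ^ K := by
        intro K
        refine le_trans (measure_mono ?_) (hstep m K)
        intro x hx
        simp only [Set.mem_iInter] at hx ⊢
        intro j hj
        exact hx j (Finset.mem_Ico.mp hj).1
      have htend : Tendsto (fun K => (1/2 : ENNReal) ^ K) atTop (𝓝 0) :=
        ENNReal.tendsto_pow_atTop_nhds_zero_of_lt_one (by norm_num)
      exact ge_of_tendsto' htend hle
    exact measure_mono_null hincl (measure_iUnion_null hCm)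


/-- If `N_F` has the BJNP then `F`, as a subset of the Cantor space, is meager and
has measure zero with respect to the standard product (fair-coin) measure:
any Borel measure giving each cylinder `{x : ∀ i ∈ s, x i = b i}` the value `(1/2)^|s|`
assigns `F` (outer) measure zero. -/
theorem stmt12 (F : Filter ℕ) (hF : IsFreeFilter F) (h : BJNP (NFtop F)) :
    IsMeagre (filterAsSet F) ∧
    ∀ P : MeasureTheory.Measure (ℕ → Bool),
      (∀ (s : Finset ℕ) (b : ℕ → Bool),
        P {x | ∀ i ∈ s, x i = b i} = (1 / 2 : ENNReal) ^ s.card) →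
      P (filterAsSet F) = 0 := by
  classical
  obtain ⟨μ, hμ⟩ := h
  obtain ⟨B, w, hw, hdisj, hmass, htend⟩ := blocks_exist hF hμ
  have hG : ∀ x ∈ filterAsSet F, ∀ᶠ j in atTop,
      ∑ i ∈ B j, Set.indicator {i' | x i' = false} (w j) i < 1/8 := by
    intro x hx
    have hA : {n : ℕ | x n = true} ∈ F := hx
    have hset : ({n : ℕ | x n = true})ᶜ = {i' | x i' = false} := by
      ext i; simp [Bool.not_eq_true]
    have h8 := (htend _ hA).eventually_lt_const (by norm_num : (0:ℝ) < 1/8)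
    simp only [hset] at h8
    exact h8
  exact cantor_small B w hw hdisj hmass (filterAsSet F) hG
end
end

section
/- If F is a free ultrafilter on ω, then the space N_F does not have the bounded Josefson–Nissenzweig property. -/
/-!
Let `μ n` be a BJN-sequence on `N_U`. Since `U` is an ultrafilter, for every `S ⊆ ω` one of
`S ∪ {p_U}` and `S` is clopen, so testing `μ n` against its indicator shows `μ n (S) → 0`
whenever `S ∉ U`. As `U` is free this covers all singletons, and of two disjoint sets at least
one is not in `U`; a gliding hump argument, with the even and the odd humps as the two disjoint
sets, then gives `‖μ n ↾ ω‖ → 0`. Finally `μ n (ω) + μ n ({p_U}) → 0` forces `μ n ({p_U}) → 0`,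
contradicting `‖μ n‖ = 1`.
-/

open Filter Topology

noncomputable section

open Finset Function

section FinitelySupportedMeasure

variable {X : Type*}

lemma msetOf_union (μ : X →₀ ℝ) {A B : Set X} (h : Disjoint A B) :
    msetOf μ (A ∪ B) = msetOf μ A + msetOf μ B := by
  simp only [msetOf, Set.indicator_union_of_disjoint h, sum_add_distrib]

lemma msetOf_singleton (μ : X →₀ ℝ) (a : X) : msetOf μ {a} = μ a := by
  classical
  simp only [msetOf, Set.indicator_apply, Set.mem_singleton_iff, sum_ite_eq',
    Finsupp.mem_support_iff, ne_eq, ite_not]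
  split_ifs with h <;> simp [h]

lemma abs_msetOf_le_mnormOn (μ : X →₀ ℝ) (A : Set X) : |msetOf μ A| ≤ mnormOn μ A :=
  (abs_sum_le_sum_abs _ _).trans_eq <| sum_congr rfl fun x _ => by
    by_cases hx : x ∈ A <;> simp [hx]

lemma mnormOn_mono (μ : X →₀ ℝ) {A B : Set X} (h : A ∩ μ.support ⊆ B) :
    mnormOn μ A ≤ mnormOn μ B :=
  sum_le_sum fun x hx => by
    by_cases hA : x ∈ A
    · simp [hA, h ⟨hA, hx⟩]
    · simp [hA, Set.indicator_apply_nonneg]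

lemma mnormOn_add_mnormOn_compl (μ : X →₀ ℝ) (A : Set X) :
    mnormOn μ A + mnormOn μ Aᶜ = mnorm μ := by
  simp only [mnormOn, mnorm, ← sum_add_distrib, Set.indicator_self_add_compl_apply]

lemma mnormOn_univ (μ : X →₀ ℝ) : mnormOn μ Set.univ = mnorm μ := by
  simp [mnormOn, mnorm]

lemma mnormOn_coe_finset (μ : X →₀ ℝ) (s : Finset X) : mnormOn μ s = ∑ x ∈ s, |μ x| := by
  classical
  rw [mnormOn, sum_indicator_eq_sum_filter]
  refine sum_subset (fun x hx => (mem_filter.1 hx).2) fun x hxs hx => ?_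
  simp_all

/-- Either the positive or the negative part of `μ` on `A` carries half of its mass. -/
lemma exists_subset_mnormOn_le_two_mul (μ : X →₀ ℝ) (A : Set X) :
    ∃ B ⊆ A ∩ μ.support, mnormOn μ A ≤ 2 * |msetOf μ B| := by
  set P := A ∩ {x | 0 < μ x}
  set N := A ∩ {x | μ x < 0}
  have hsplit : mnormOn μ A = msetOf μ P - msetOf μ N := by
    rw [mnormOn, msetOf, msetOf, ← sum_sub_distrib]
    refine sum_congr rfl fun x _ => ?_
    by_cases hA : x ∈ A
    · rcases lt_trichotomy (μ x) 0 with h | h | h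
      · simp [P, N, hA, h, h.not_gt, abs_of_neg h]
      · simp [P, N, h]
      · simp [P, N, hA, h, h.not_gt, abs_of_pos h]
    · simp [P, N, hA]
  have hP : P ⊆ A ∩ μ.support := fun x hx => ⟨hx.1, Finsupp.mem_support_iff.2 hx.2.ne'⟩
  have hN : N ⊆ A ∩ μ.support := fun x hx => ⟨hx.1, Finsupp.mem_support_iff.2 hx.2.ne⟩
  have htri := hsplit ▸ abs_sub (msetOf μ P) (msetOf μ N)
  have hle := le_abs_self (mnormOn μ A)
  rcases le_total |msetOf μ N| |msetOf μ P| with h | h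
  · exact ⟨P, hP, by linarith⟩
  · exact ⟨N, hN, by linarith⟩

lemma sum_support_option (μ : Option X →₀ ℝ) (g : Option X → ℝ → ℝ) (hg : ∀ x, g x 0 = 0) :
    ∑ x ∈ μ.support, g x (μ x) =
      g none (μ none) + ∑ a ∈ μ.some.support, g (some a) (μ.some a) := by
  have hsub : μ.support ⊆ insertNone μ.some.support := fun x hx => by
    rw [mem_insertNone]
    rintro a rfl
    simpa using hx
  exact (Finsupp.sum_of_support_subset μ hsub g fun x _ => hg x).trans (sum_insertNone _ _)

lemma mnorm_option (μ : Option X →₀ ℝ) : mnorm μ = |μ none| + mnorm μ.some :=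
  sum_support_option μ (fun _ r => |r|) fun _ => abs_zero

lemma mIntg_option (μ : Option X →₀ ℝ) (f : Option X → ℝ) :
    mIntg μ f = μ none * f none + mIntg μ.some (f ∘ some) :=
  sum_support_option μ (fun x r => r * f x) fun _ => zero_mul _

lemma mIntg_indicator_one (μ : X →₀ ℝ) (S : Set X) : mIntg μ (S.indicator 1) = msetOf μ S :=
  sum_congr rfl fun x _ => by by_cases hx : x ∈ S <;> simp [hx]

end FinitelySupportedMeasure

lemma continuous_NFtop_of_tendsto {α β : Type*} [TopologicalSpace β] {F : Filter α}
    {f : Option α → β} (hf : Tendsto (f ∘ some) F (𝓝 (f none))) :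
    @Continuous _ _ (NFtop F) _ f :=
  (@continuous_def _ _ (NFtop F) _ f).2 fun _ hV hnone => hf (hV.mem_nhds hnone)

namespace IsBJNSeq

variable {α : Type*} {F : Filter α} {μ : ℕ → Option α →₀ ℝ}

/-- Test `μ n` against the indicator of `S`, extended to `p_F` by its limit `c` along `F`. -/
lemma tendsto_msetOf_add_mul (hμ : IsBJNSeq (NFtop F) μ) {S : Set α} {c : ℝ}
    (hc : Tendsto (S.indicator 1) F (𝓝 c)) :
    Tendsto (fun n => msetOf (μ n).some S + c * μ n none) atTop (𝓝 0) := by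
  set f : Option α → ℝ := fun x => x.elim c (S.indicator 1)
  have hbdd : ∀ x, |f x| ≤ |c| + 1 := by
    rintro (_ | a)
    · simp [f]
    · by_cases ha : a ∈ S <;> simp [f, ha, add_nonneg]
  convert hμ.2 f (continuous_NFtop_of_tendsto hc) ⟨_, hbdd⟩ using 2 with n
  rw [mIntg_option, show f none = c from rfl, show f ∘ some = S.indicator 1 from rfl,
    mIntg_indicator_one]
  ring

lemma tendsto_msetOf_of_compl_mem (hμ : IsBJNSeq (NFtop F) μ) {S : Set α} (hS : Sᶜ ∈ F) :
    Tendsto (fun n => msetOf (μ n).some S) atTop (𝓝 0) := by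
  have hc : Tendsto (S.indicator (1 : α → ℝ)) F (𝓝 0) :=
    tendsto_const_nhds.congr' <|
      mem_of_superset hS fun a ha => (Set.indicator_of_notMem ha _).symm
  simpa using hμ.tendsto_msetOf_add_mul hc

lemma tendsto_msetOf_add_of_mem (hμ : IsBJNSeq (NFtop F) μ) {S : Set α} (hS : S ∈ F) :
    Tendsto (fun n => msetOf (μ n).some S + μ n none) atTop (𝓝 0) := by
  have hc : Tendsto (S.indicator (1 : α → ℝ)) F (𝓝 1) :=
    tendsto_const_nhds.congr' <|
      mem_of_superset hS fun a ha => (Set.indicator_of_mem ha _).symm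
  simpa using hμ.tendsto_msetOf_add_mul hc

end IsBJNSeq

section GlidingHump

variable {α : Type*} (ν : ℕ → α →₀ ℝ) {G Q : ℕ → Set α}

lemma pairwise_disjoint_humps (hG : Monotone G) (hsupp : ∀ k, ↑(ν k).support ⊆ G (k + 1))
    (hQ : ∀ k, Q k ⊆ (G k)ᶜ ∩ (ν k).support) : Pairwise (Disjoint on Q) :=
  (pairwise_disjoint_on Q).2 fun i j hij =>
    Disjoint.mono (fun _ hx => hG hij ((hsupp i) (hQ i hx).2)) (fun _ hx => (hQ j hx).1)
      disjoint_compl_right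

lemma abs_msetOf_biUnion_humps_sub_le (hG : Monotone G)
    (hsupp : ∀ k, ↑(ν k).support ⊆ G (k + 1)) (hQ : ∀ k, Q k ⊆ (G k)ᶜ ∩ (ν k).support)
    {I : Set ℕ} {k : ℕ} (hk : k ∈ I) :
    |msetOf (ν k) (⋃ i ∈ I, Q i) - msetOf (ν k) (Q k)| ≤ mnormOn (ν k) (G k) := by
  set A := ⋃ i ∈ I, Q i
  have hA : A = Q k ∪ (A \ Q k) :=
    (Set.union_sdiff_cancel (Set.subset_biUnion_of_mem hk)).symm
  have hrest : (A \ Q k) ∩ (ν k).support ⊆ G k := by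
    rintro x ⟨⟨hxA, hxk⟩, hx⟩
    obtain ⟨i, -, hxi⟩ := Set.mem_iUnion₂.1 hxA
    rcases lt_trichotomy i k with hik | rfl | hki
    · exact hG hik ((hsupp i) (hQ i hxi).2)
    · exact absurd hxi hxk
    · exact absurd (hG hki ((hsupp k) hx)) (hQ i hxi).1
  rw [hA, msetOf_union _ Set.disjoint_sdiff_right, add_sub_cancel_left]
  exact (abs_msetOf_le_mnormOn _ _).trans (mnormOn_mono _ hrest)

lemma not_tendsto_msetOf_biUnion_humps (hG : Monotone G)
    (hsupp : ∀ k, ↑(ν k).support ⊆ G (k + 1)) (hQ : ∀ k, Q k ⊆ (G k)ᶜ ∩ (ν k).support)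
    {δ : ℝ} (hδ : 0 < δ) (hsmall : ∀ k, mnormOn (ν k) (G k) ≤ δ)
    (hbig : ∀ k, 3 * δ ≤ |msetOf (ν k) (Q k)|) {I : Set ℕ} (hI : I.Infinite) :
    ¬ Tendsto (fun n => msetOf (ν n) (⋃ i ∈ I, Q i)) atTop (𝓝 0) := by
  intro h
  have hlt : ∀ᶠ n in atTop, |msetOf (ν n) (⋃ i ∈ I, Q i)| < 2 * δ :=
    h.abs.eventually (eventually_lt_nhds (by rw [abs_zero]; linarith))
  obtain ⟨N, hN⟩ := eventually_atTop.1 hlt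
  obtain ⟨k, hkI, hNk⟩ := hI.exists_gt N
  have hnear := abs_msetOf_biUnion_humps_sub_le ν hG hsupp hQ hkI
  have htri := abs_sub_abs_le_abs_sub (msetOf (ν k) (Q k)) (msetOf (ν k) (⋃ i ∈ I, Q i))
  rw [abs_sub_comm] at htri
  linarith [hN k hNk.le, hsmall k, hbig k]

end GlidingHump

section Phillips

variable {α : Type*} {ν : ℕ → α →₀ ℝ}

lemma tendsto_mnormOn_finset (hpt : ∀ a, Tendsto (fun n => ν n a) atTop (𝓝 0))
    (s : Finset α) :
    Tendsto (fun n => mnormOn (ν n) s) atTop (𝓝 0) := by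
  simpa [mnormOn_coe_finset] using tendsto_finsetSum s fun a _ => (hpt a).abs

lemma exists_strictMono_mnormOn_le (hpt : ∀ a, Tendsto (fun n => ν n a) atTop (𝓝 0))
    {ε : ℝ} (hε : ∃ᶠ n in atTop, ε ≤ mnorm (ν n)) {δ : ℝ} (hδ : 0 < δ) (G : ℕ → Finset α) :
    ∃ φ : ℕ → ℕ, StrictMono φ ∧ (∀ k, ε ≤ mnorm (ν (φ k))) ∧
      ∀ k, mnormOn (ν (φ (k + 1))) (G (φ k)) ≤ δ := by
  obtain ⟨φ, hbig, hnext⟩ := exists_seq_of_forall_finset_exists (fun n => ε ≤ mnorm (ν n))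
    (fun m n => m < n ∧ mnormOn (ν n) (G m) ≤ δ) fun s _ => by
      have hev : ∀ᶠ n in atTop, ∀ m ∈ s, m < n ∧ mnormOn (ν n) (G m) ≤ δ :=
        (eventually_all_finset s).2 fun m _ =>
          (eventually_gt_atTop m).and <|
            (tendsto_mnormOn_finset hpt _).eventually (eventually_le_nhds hδ)
      exact (hε.and_eventually hev).exists
  exact ⟨φ, strictMono_nat_of_lt_succ fun k => (hnext k (k + 1) k.lt_succ_self).1, hbig,
    fun k => (hnext k (k + 1) k.lt_succ_self).2⟩

/-- A Phillips-type lemma. -/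
theorem tendsto_mnorm_of_disjoint (hpt : ∀ a, Tendsto (fun n => ν n a) atTop (𝓝 0))
    (hdisj : ∀ A B : Set α, Disjoint A B → Tendsto (fun n => msetOf (ν n) A) atTop (𝓝 0) ∨
      Tendsto (fun n => msetOf (ν n) B) atTop (𝓝 0)) :
    Tendsto (fun n => mnorm (ν n)) atTop (𝓝 0) := by
  classical
  by_contra hnot
  obtain ⟨ε, hε, hfreq⟩ : ∃ ε > 0, ∃ᶠ n in atTop, ε ≤ mnorm (ν n) := by
    by_contra! h
    exact hnot <| tendsto_order.2 ⟨fun a ha => Eventually.of_forall fun n =>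
      ha.trans_le (sum_nonneg fun _ _ => abs_nonneg _), h⟩
  set G : ℕ → Finset α := fun N => (range (N + 1)).biUnion fun m => (ν m).support
  obtain ⟨φ, hφ, hbig, hsmall⟩ :=
    exists_strictMono_mnormOn_le hpt hfreq (by positivity : 0 < ε / 8) G
  set ν' : ℕ → α →₀ ℝ := fun k => ν (φ (k + 1))
  set G' : ℕ → Set α := fun k => G (φ k)
  have hG' : Monotone G' := fun i j hij => coe_subset.2 <|
    biUnion_subset_biUnion_of_subset_left _ <|
      range_subset_range.2 <| by simpa using hφ.monotone hij
  have hsupp : ∀ k, ↑(ν' k).support ⊆ G' (k + 1) := fun k =>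
    coe_subset.2 <| subset_biUnion_of_mem (fun m => (ν m).support) (self_mem_range_succ _)
  choose Q hQ hQbig using fun k => exists_subset_mnormOn_le_two_mul (ν' k) (G' k)ᶜ
  have hhump : ∀ k, 3 * (ε / 8) ≤ |msetOf (ν' k) (Q k)| := fun k => by
    linarith [mnormOn_add_mnormOn_compl (ν' k) (G' k), hbig (k + 1), hsmall k, hQbig k]
  have hdisjoint : Disjoint (⋃ i ∈ {k | Even k}, Q i) (⋃ i ∈ {k | Odd k}, Q i) :=
    Set.disjoint_iUnion₂_left.2 fun i hi => Set.disjoint_iUnion₂_right.2 fun j hj =>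
      pairwise_disjoint_humps ν' hG' hsupp hQ fun hij => Nat.not_even_iff_odd.2 hj (hij ▸ hi)
  have hsub : Tendsto (fun k => φ (k + 1)) atTop atTop :=
    hφ.tendsto_atTop.comp (tendsto_add_atTop_nat 1)
  have hnot_tendsto {I : Set ℕ} (hI : I.Infinite) :=
    not_tendsto_msetOf_biUnion_humps ν' hG' hsupp hQ (by positivity) hsmall hhump hI
  rcases hdisj _ _ hdisjoint with h | h
  · exact hnot_tendsto (Set.infinite_of_forall_exists_gt fun N =>
      ⟨2 * (N + 1), even_two_mul _, by omega⟩) (h.comp hsub)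
  · exact hnot_tendsto (Set.infinite_of_forall_exists_gt fun N =>
      ⟨2 * N + 1, odd_two_mul_add_one _, by omega⟩) (h.comp hsub)

end Phillips

/-- If `F` is a free ultrafilter on `ω`, then `N_F` does not have the BJNP. -/
theorem stmt13 (U : Ultrafilter ℕ) (hfree : (U : Filter ℕ) ≤ Filter.cofinite) :
    ¬ BJNP (NFtop (U : Filter ℕ)) := by
  rintro ⟨μ, hμ⟩
  have hsome : Tendsto (fun n => mnorm (μ n).some) atTop (𝓝 0) := by
    refine tendsto_mnorm_of_disjoint (fun a => ?_) fun A B hAB => ?_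
    · simpa [msetOf_singleton] using
        hμ.tendsto_msetOf_of_compl_mem (hfree (Set.finite_singleton a).compl_mem_cofinite)
    · by_cases hA : Aᶜ ∈ U
      · exact .inl (hμ.tendsto_msetOf_of_compl_mem hA)
      · exact .inr (hμ.tendsto_msetOf_of_compl_mem <|
          mem_of_superset (Ultrafilter.compl_notMem_iff.1 hA) hAB.subset_compl_right)
  have hnone : Tendsto (fun n => μ n none) atTop (𝓝 0) := by
    have huniv : Tendsto (fun n => msetOf (μ n).some Set.univ) atTop (𝓝 0) :=
      squeeze_zero_norm (fun n => (abs_msetOf_le_mnormOn _ _).trans_eq (mnormOn_univ _)) hsome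
    simpa using (hμ.tendsto_msetOf_add_of_mem univ_mem).sub huniv
  have hnorm := hnone.abs.add hsome
  simp [← mnorm_option, hμ.1] at hnorm
end
end
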